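/- arXiv:2307.06611 — 4 statements merged into one kernel-verified Lean document; each statement's English description precedes it below -/
import Mathlib

section
/- Stochastic games with the negative exponential utility as payoff function are determined: for every turn-based stochastic game G, reward function r : S → [0,∞), basis b > 1, risk-aversion factor γ > 0, and state s, one has inf_σ sup_τ E^{(σ,τ)}_{G,s}[b^{−γT}] = sup_τ inf_σ E^{(σ,τ)}_{G,s}[b^{−γT}], where σ ranges over all Maximizer strategies and τ over all Minimizer strategies. -/
open scoped ENNReal NNReal

/-- A turn-based stochastic game: finitely many states partitioned into Maximizer
states (`isMax s = true`) and Minimizer states, finitely many actions with a nonempty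
set of available actions at every state, and a transition function assigning to every
state and action a probability distribution over states. -/
structure SG (S A : Type*) [Fintype S] [Fintype A] where
  isMax : S → Bool
  actions : S → Finset A
  actions_nonempty : ∀ s, (actions s).Nonempty
  trans : S → A → S → ℝ≥0∞
  trans_sum : ∀ s a, ∑ s' : S, trans s a s' = 1

variable {S A : Type*} [Fintype S] [Fintype A]

/-- A (history-dependent, randomized) strategy: assigns to every history
(a list of past state-action pairs together with the current state) a probability
distribution over the available actions.  The same type serves for Maximizer and
Minimizer strategies; a strategy is only consulted at the states of its owner. -/
structure Strategy (G : SG S A) where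
  act : List (S × A) → S → A → ℝ≥0∞
  act_sum : ∀ h s, ∑ a ∈ G.actions s, act h s a = 1
  act_mem : ∀ h s a, a ∉ G.actions s → act h s a = 0

/-- The memoryless deterministic strategy induced by a function `f : S → A`
choosing an available action in each state. -/
noncomputable def Strategy.ofMD [DecidableEq A] (G : SG S A) (f : S → A)
    (hf : ∀ s, f s ∈ G.actions s) : Strategy G where
  act := fun _ s a => if a = f s then 1 else 0
  act_sum := by
    intro h s
    rw [Finset.sum_ite_eq' (G.actions s) (f s) (fun _ => (1 : ℝ≥0∞))]
    simp [hf s]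
  act_mem := by
    intro h s a ha
    by_cases hfa : a = f s
    · exact absurd (hf s) (by rwa [hfa] at ha)
    · simp [hfa]

/-- Probability, under the strategy profile `(σ, τ)`, that the play starting in state
`s` after history `h` performs exactly the finite sequence `w` of (action, next state)
steps.  This is the cylinder probability of the induced path measure. -/
noncomputable def runProb (G : SG S A) (σ τ : Strategy G) :
    List (S × A) → S → List (A × S) → ℝ≥0∞
  | _, _, [] => 1
  | h, s, (a, s') :: w =>
      (if G.isMax s then σ.act h s a else τ.act h s a) * G.trans s a s' *
        runProb G σ τ (h ++ [(s, a)]) s' w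

/-- Finite-horizon negative exponential utility: the expectation, over plays of length
`n` from `s`, of `b ^ (−γ · (partial total reward))`. -/
noncomputable def utilityN (G : SG S A) (σ τ : Strategy G) (r : S → ℝ≥0) (b γ : ℝ)
    (s : S) (n : ℕ) : ℝ≥0∞ :=
  ∑ w : Fin n → A × S,
    runProb G σ τ [] s (List.ofFn w) *
      ENNReal.ofReal (b ^ (-(γ * ((r s : ℝ) + ∑ i, (r (w i).2 : ℝ)))))

/-- The negative exponential utility `U_{G,s}(σ,τ) = E[b^{−γ T}]`, obtained as the
monotone limit of its finite-horizon approximations (rewards are nonnegative, so the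
integrands decrease to `b^{−γT}`, with `b^{−γ·∞} := 0`). -/
noncomputable def utility (G : SG S A) (σ τ : Strategy G) (r : S → ℝ≥0) (b γ : ℝ)
    (s : S) : ℝ≥0∞ :=
  ⨅ n : ℕ, utilityN G σ τ r b γ s n

/-- Probability that the play from `s` visits the set `T` within the first `n` steps. -/
noncomputable def reachProbN (G : SG S A) (σ τ : Strategy G) (T : Set S) (s : S)
    (n : ℕ) : ℝ≥0∞ :=
  ∑ w : Fin n → A × S,
    Set.indicator {w : Fin n → A × S | s ∈ T ∨ ∃ i, (w i).2 ∈ T}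
      (fun w => runProb G σ τ [] s (List.ofFn w)) w

/-- Probability `P^{(σ,τ)}_{G,s}[◇T]` that the play eventually visits `T`. -/
noncomputable def reachProb (G : SG S A) (σ τ : Strategy G) (T : Set S) (s : S) : ℝ≥0∞ :=
  ⨆ n : ℕ, reachProbN G σ τ T s n

/-- Probability that the total reward accumulated within the first `n` steps exceeds `K`. -/
noncomputable def exceedProbN (G : SG S A) (σ τ : Strategy G) (r : S → ℝ≥0) (K : ℝ)
    (s : S) (n : ℕ) : ℝ≥0∞ :=
  ∑ w : Fin n → A × S,
    Set.indicator {w : Fin n → A × S | K < (r s : ℝ) + ∑ i, (r (w i).2 : ℝ)}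
      (fun w => runProb G σ τ [] s (List.ofFn w)) w

/-- `P^{(σ,τ)}_{G,s}[T > 0]`, the probability that the total reward is positive. -/
noncomputable def probPosReward (G : SG S A) (σ τ : Strategy G) (r : S → ℝ≥0)
    (s : S) : ℝ≥0∞ :=
  ⨆ n : ℕ, exceedProbN G σ τ r 0 s n

/-- `P^{(σ,τ)}_{G,s}[T = ∞]`, the probability that the total reward is infinite. -/
noncomputable def probInfReward (G : SG S A) (σ τ : Strategy G) (r : S → ℝ≥0)
    (s : S) : ℝ≥0∞ :=
  ⨅ K : ℕ, ⨆ n : ℕ, exceedProbN G σ τ r K s n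

/-- `S₀`: the states from which the Maximizer cannot achieve positive total reward with
positive probability, i.e. `sup_σ inf_τ P[T > 0] = 0`. -/
noncomputable def S0 (G : SG S A) (r : S → ℝ≥0) : Set S :=
  {s | (⨆ σ : Strategy G, ⨅ τ : Strategy G, probPosReward G σ τ r s) = 0}

/-- `S∞`: the states from which the Maximizer can ensure infinite total reward almost
surely, i.e. `sup_σ inf_τ P[T = ∞] = 1`. -/
noncomputable def Sinf (G : SG S A) (r : S → ℝ≥0) : Set S :=
  {s | (⨆ σ : Strategy G, ⨅ τ : Strategy G, probInfReward G σ τ r s) = 1}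

/-- The optimal negative exponential utility `U*(s) = inf_σ sup_τ U_{G,s}(σ,τ)`. -/
noncomputable def Ustar (G : SG S A) (r : S → ℝ≥0) (b γ : ℝ) (s : S) : ℝ≥0∞ :=
  ⨅ σ : Strategy G, ⨆ τ : Strategy G, utility G σ τ r b γ s

/-- The entropic risk `−(1/γ)·log_b u` associated to a utility value `u ∈ [0,1]`,
with `−log_b 0 := ∞`. -/
noncomputable def erisk (b γ : ℝ) (u : ℝ≥0∞) : ℝ≥0∞ :=
  if u = 0 then ⊤ else ENNReal.ofReal (-(1 / γ) * Real.logb b u.toReal)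

/-- The entropic risk of the total reward under profile `(σ, τ)` from `s`. -/
noncomputable def ERiskVal (G : SG S A) (σ τ : Strategy G) (r : S → ℝ≥0) (b γ : ℝ)
    (s : S) : ℝ≥0∞ :=
  erisk b γ (utility G σ τ r b γ s)

/-- The optimal entropic risk `ERisk*(s) = sup_σ inf_τ ERisk_{G,s}(σ,τ)`. -/
noncomputable def ERiskStar (G : SG S A) (r : S → ℝ≥0) (b γ : ℝ) (s : S) : ℝ≥0∞ :=
  ⨆ σ : Strategy G, ⨅ τ : Strategy G, ERiskVal G σ τ r b γ s

set_option linter.unusedSectionVars false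

-- exchange lemmas
lemma iInf_sup_antitone {f g : ℕ → ℝ≥0∞} (hf : Antitone f) (hg : Antitone g) :
    ⨅ n, (f n ⊔ g n) = (⨅ n, f n) ⊔ (⨅ n, g n) := by
  apply le_antisymm
  · rw [iInf_sup_eq]
    refine le_iInf fun n => ?_
    rw [sup_iInf_eq]
    refine le_iInf fun m => iInf_le_of_le (max n m) ?_
    exact sup_le_sup (hf (le_max_left n m)) (hg (le_max_right n m))
  · exact le_iInf fun n => sup_le_sup (iInf_le f n) (iInf_le g n)

lemma iInf_add_antitone {f g : ℕ → ℝ≥0∞} (hf : Antitone f) (hg : Antitone g) :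
    ⨅ n, (f n + g n) = (⨅ n, f n) + (⨅ n, g n) := by
  refine (ENNReal.iInf_add_iInf fun i j => ⟨max i j, ?_⟩).symm
  exact add_le_add (hf (le_max_left i j)) (hg (le_max_right i j))

lemma iInf_sum_antitone {ι : Type*} (t : Finset ι) (F : ι → ℕ → ℝ≥0∞)
    (hF : ∀ i, Antitone (F i)) :
    ⨅ n, ∑ i ∈ t, F i n = ∑ i ∈ t, ⨅ n, F i n := by
  classical
  induction t using Finset.cons_induction with
  | empty => simp
  | cons a t ha ih =>
    simp only [Finset.sum_cons]
    rw [iInf_add_antitone (hF a) (fun n m h => Finset.sum_le_sum fun i _ => hF i h), ih]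

lemma iInf_sup'_antitone {ι : Type*} (t : Finset ι) (ht : t.Nonempty) (F : ι → ℕ → ℝ≥0∞)
    (hF : ∀ i, Antitone (F i)) :
    ⨅ n, t.sup' ht (fun i => F i n) = t.sup' ht (fun i => ⨅ n, F i n) := by
  classical
  induction ht using Finset.Nonempty.cons_induction with
  | singleton a => rfl
  | cons a t ha ht' ih =>
    simp only [Finset.sup'_cons ht']
    rw [iInf_sup_antitone (hF a) (fun n m h => ?_), ih]
    exact Finset.sup'_mono_fun fun i _ => hF i h


noncomputable def cc (r : S → ℝ≥0) (b γ : ℝ) (s : S) : ℝ≥0∞ :=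
  ENNReal.ofReal (b ^ (-(γ * (r s : ℝ))))

lemma cc_ne_top (r : S → ℝ≥0) (b γ : ℝ) (s : S) : cc r b γ s ≠ ⊤ := ENNReal.ofReal_ne_top

lemma cc_le_one (r : S → ℝ≥0) {b γ : ℝ} (hb : 1 < b) (hγ : 0 < γ) (s : S) :
    cc r b γ s ≤ 1 := by
  rw [cc, ← ENNReal.ofReal_one]
  apply ENNReal.ofReal_le_ofReal
  apply Real.rpow_le_one_of_one_le_of_nonpos hb.le
  simp [mul_nonneg hγ.le (r s).coe_nonneg]

noncomputable def W (G : SG S A) (σ τ : Strategy G) (r : S → ℝ≥0) (b γ : ℝ) :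
    ℕ → List (S × A) → S → ℝ≥0∞
  | 0, _, _ => 1
  | n+1, h, s => ∑ a : A, (if G.isMax s then σ.act h s a else τ.act h s a) *
      ∑ s' : S, G.trans s a s' * (cc r b γ s' * W G σ τ r b γ n (h ++ [(s, a)]) s')

lemma weight_eq {r : S → ℝ≥0} {b γ : ℝ} (hb : 1 < b) (s : S) {n : ℕ} (w : Fin n → A × S) :
    ENNReal.ofReal (b ^ (-(γ * ((r s : ℝ) + ∑ i, (r (w i).2 : ℝ))))) =
      cc r b γ s * ∏ i, cc r b γ (w i).2 := by
  have hb0 : (0 : ℝ) < b := lt_trans one_pos hb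
  simp only [cc]
  rw [← ENNReal.ofReal_prod_of_nonneg (fun i _ => (Real.rpow_pos_of_pos hb0 _).le)]
  rw [← ENNReal.ofReal_mul (Real.rpow_pos_of_pos hb0 _).le]
  congr 1
  rw [← Real.rpow_sum_of_pos hb0, ← Real.rpow_add hb0]
  congr 1
  rw [mul_add, Finset.mul_sum, neg_add, ← Finset.sum_neg_distrib]


set_option linter.unusedSectionVars false

lemma sum_runProb_eq_W (G : SG S A) (σ τ : Strategy G) (r : S → ℝ≥0) (b γ : ℝ) :
    ∀ (n : ℕ) (h : List (S × A)) (s : S),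
      (∑ w : Fin n → A × S, runProb G σ τ h s (List.ofFn w) * ∏ i, cc r b γ (w i).2) =
        W G σ τ r b γ n h s
  | 0, h, s => by simp [runProb, W]
  | n+1, h, s => by
    rw [W, ← Equiv.sum_comp (Fin.consEquiv (fun _ : Fin (n+1) => A × S))]
    rw [Fintype.sum_prod_type]
    rw [Fintype.sum_prod_type]
    refine Finset.sum_congr rfl fun a _ => ?_
    rw [Finset.mul_sum]
    refine Finset.sum_congr rfl fun s' _ => ?_
    rw [← sum_runProb_eq_W G σ τ r b γ n (h ++ [(s, a)]) s', Finset.mul_sum,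
      Finset.mul_sum, Finset.mul_sum]
    refine Finset.sum_congr rfl fun w _ => ?_
    have h1 : List.ofFn (Fin.consEquiv (fun _ : Fin (n+1) => A × S) ((a, s'), w)) =
        (a, s') :: List.ofFn w := by
      simp [Fin.consEquiv, List.ofFn_succ]
    have h2 : (∏ i : Fin (n+1),
        cc r b γ ((Fin.consEquiv (fun _ : Fin (n+1) => A × S) ((a, s'), w)) i).2) =
        cc r b γ s' * ∏ i : Fin n, cc r b γ (w i).2 := by
      rw [Fin.prod_univ_succ]
      simp [Fin.consEquiv]
    rw [h1, h2, runProb]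
    ring

lemma utilityN_eq_W (G : SG S A) (σ τ : Strategy G) (r : S → ℝ≥0) {b : ℝ} (γ : ℝ)
    (hb : 1 < b) (s : S) (n : ℕ) :
    utilityN G σ τ r b γ s n = cc r b γ s * W G σ τ r b γ n [] s := by
  rw [← sum_runProb_eq_W G σ τ r b γ n [] s, utilityN, Finset.mul_sum]
  refine Finset.sum_congr rfl fun w _ => ?_
  rw [weight_eq hb]
  ring

noncomputable def stp (G : SG S A) (r : S → ℝ≥0) (b γ : ℝ) (s : S) (a : A)
    (v : S → ℝ≥0∞) : ℝ≥0∞ :=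
  ∑ s' : S, G.trans s a s' * (cc r b γ s' * v s')

lemma trans_le_one (G : SG S A) (s : S) (a : A) (s' : S) : G.trans s a s' ≤ 1 := by
  rw [← G.trans_sum s a]
  exact Finset.single_le_sum (fun _ _ => zero_le) (Finset.mem_univ s')

lemma stp_mono (G : SG S A) (r : S → ℝ≥0) (b γ : ℝ) (s : S) (a : A) {v w : S → ℝ≥0∞}
    (hvw : ∀ s', v s' ≤ w s') : stp G r b γ s a v ≤ stp G r b γ s a w :=
  Finset.sum_le_sum fun s' _ => mul_le_mul_right (mul_le_mul_right (hvw s') _) _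

lemma stp_le_one (G : SG S A) (r : S → ℝ≥0) {b γ : ℝ} (hb : 1 < b) (hγ : 0 < γ)
    (s : S) (a : A) {v : S → ℝ≥0∞} (hv : ∀ s', v s' ≤ 1) : stp G r b γ s a v ≤ 1 := by
  rw [← G.trans_sum s a]
  refine Finset.sum_le_sum fun s' _ => ?_
  calc G.trans s a s' * (cc r b γ s' * v s') ≤ G.trans s a s' * (1 * 1) :=
        mul_le_mul_right (mul_le_mul' (cc_le_one r hb hγ s') (hv s')) _
    _ = G.trans s a s' := by rw [mul_one, mul_one]

noncomputable def val (G : SG S A) (r : S → ℝ≥0) (b γ : ℝ) : ℕ → S → ℝ≥0∞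
  | 0, _ => 1
  | n+1, s => if G.isMax s
      then (G.actions s).inf' (G.actions_nonempty s)
        fun a => stp G r b γ s a (val G r b γ n)
      else (G.actions s).sup' (G.actions_nonempty s)
        fun a => stp G r b γ s a (val G r b γ n)

lemma val_le_one (G : SG S A) (r : S → ℝ≥0) {b γ : ℝ} (hb : 1 < b) (hγ : 0 < γ) :
    ∀ n s, val G r b γ n s ≤ 1
  | 0, s => le_refl 1
  | n+1, s => by
    rw [val]
    split
    · obtain ⟨a, ha⟩ := G.actions_nonempty s
      exact le_trans (Finset.inf'_le _ ha)
        (stp_le_one G r hb hγ s a (val_le_one G r hb hγ n))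
    · exact Finset.sup'_le _ _ fun a _ => stp_le_one G r hb hγ s a (val_le_one G r hb hγ n)

lemma val_succ_le (G : SG S A) (r : S → ℝ≥0) {b γ : ℝ} (hb : 1 < b) (hγ : 0 < γ) :
    ∀ n s, val G r b γ (n+1) s ≤ val G r b γ n s
  | 0, s => val_le_one G r hb hγ 1 s
  | n+1, s => by
    rw [val, val]
    split
    · refine Finset.le_inf' _ _ fun a ha => ?_
      exact le_trans (Finset.inf'_le _ ha) (stp_mono G r b γ s a (val_succ_le G r hb hγ n))
    · refine Finset.sup'_mono_fun fun a _ => ?_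
      exact stp_mono G r b γ s a (val_succ_le G r hb hγ n)

lemma val_antitone (G : SG S A) (r : S → ℝ≥0) {b γ : ℝ} (hb : 1 < b) (hγ : 0 < γ)
    (s : S) : Antitone fun n => val G r b γ n s :=
  antitone_nat_of_succ_le fun n => val_succ_le G r hb hγ n s

noncomputable def Vl (G : SG S A) (r : S → ℝ≥0) (b γ : ℝ) (s : S) : ℝ≥0∞ :=
  ⨅ n, val G r b γ n s

lemma stp_Vl (G : SG S A) (r : S → ℝ≥0) {b γ : ℝ} (hb : 1 < b) (hγ : 0 < γ)
    (s : S) (a : A) :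
    stp G r b γ s a (Vl G r b γ) = ⨅ n, stp G r b γ s a (val G r b γ n) := by
  have : ∀ s' : S, Antitone fun n =>
      G.trans s a s' * (cc r b γ s' * val G r b γ n s') := fun s' n m h =>
    mul_le_mul_right (mul_le_mul_right (val_antitone G r hb hγ s' h) _) _
  have hne : ∀ s', G.trans s a s' * cc r b γ s' ≠ ⊤ :=
    fun s' => ENNReal.mul_ne_top (lt_of_le_of_lt (trans_le_one G s a s') ENNReal.one_lt_top).ne
      (cc_ne_top r b γ s')
  calc stp G r b γ s a (Vl G r b γ)
      = ∑ s' : S, ⨅ n, G.trans s a s' * (cc r b γ s' * val G r b γ n s') := by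
        refine Finset.sum_congr rfl fun s' _ => ?_
        simp only [← mul_assoc]
        rw [Vl, ENNReal.mul_iInf (fun h => absurd h (hne s'))]
    _ = ⨅ n, stp G r b γ s a (val G r b γ n) := (iInf_sum_antitone Finset.univ _ this).symm

lemma Vl_le_one (G : SG S A) (r : S → ℝ≥0) {b γ : ℝ} (hb : 1 < b) (hγ : 0 < γ) (s : S) :
    Vl G r b γ s ≤ 1 := iInf_le_of_le 0 (le_refl 1)

lemma Vl_le_stp_max (G : SG S A) (r : S → ℝ≥0) {b γ : ℝ} (hb : 1 < b) (hγ : 0 < γ)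
    (s : S) (hs : G.isMax s = true) {a : A} (ha : a ∈ G.actions s) :
    Vl G r b γ s ≤ stp G r b γ s a (Vl G r b γ) := by
  rw [stp_Vl G r hb hγ]
  refine le_iInf fun n => ?_
  refine iInf_le_of_le (n+1) ?_
  rw [val, if_pos hs]
  exact Finset.inf'_le _ ha

lemma Vl_le_sup'_min (G : SG S A) (r : S → ℝ≥0) {b γ : ℝ} (hb : 1 < b) (hγ : 0 < γ)
    (s : S) (hs : ¬ G.isMax s = true) :
    Vl G r b γ s ≤ (G.actions s).sup' (G.actions_nonempty s)
      fun a => stp G r b γ s a (Vl G r b γ) := by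
  have h1 : (G.actions s).sup' (G.actions_nonempty s)
      (fun a => stp G r b γ s a (Vl G r b γ)) =
      ⨅ n, (G.actions s).sup' (G.actions_nonempty s)
        (fun a => stp G r b γ s a (val G r b γ n)) := by
    rw [iInf_sup'_antitone _ (G.actions_nonempty s) _
      (fun a n m h => stp_mono G r b γ s a (fun s' => val_antitone G r hb hγ s' h))]
    exact Finset.sup'_congr _ rfl fun a _ => stp_Vl G r hb hγ s a
  rw [h1]
  refine le_iInf fun n => iInf_le_of_le (n+1) ?_
  rw [val, if_neg hs]

open scoped Classical

/-- Deterministic history-dependent strategy. -/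
noncomputable def detStrategy (G : SG S A) (g : List (S × A) → S → A)
    (hg : ∀ h s, g h s ∈ G.actions s) : Strategy G where
  act := fun h s a => if a = g h s then 1 else 0
  act_sum := by
    intro h s
    rw [Finset.sum_ite_eq' (G.actions s) (g h s) (fun _ => (1 : ℝ≥0∞))]
    simp [hg h s]
  act_mem := by
    intro h s a ha
    by_cases hfa : a = g h s
    · exact absurd (hg h s) (by rwa [hfa] at ha)
    · simp [hfa]

lemma detStrategy_act (G : SG S A) (g : List (S × A) → S → A)
    (hg : ∀ h s, g h s ∈ G.actions s) (h : List (S × A)) (s : S) (a : A) :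
    (detStrategy G g hg).act h s a = if a = g h s then 1 else 0 := rfl

lemma sum_det {X : A → ℝ≥0∞} (a₀ : A) :
    (∑ a : A, (if a = a₀ then (1:ℝ≥0∞) else 0) * X a) = X a₀ := by
  rw [Finset.sum_congr rfl (fun a _ => by rw [ite_mul, one_mul, zero_mul])]
  rw [Finset.sum_ite_eq' Finset.univ a₀ X]
  simp

/-- restrict a strategy-weighted sum to the available actions -/
lemma sum_strat_eq (G : SG S A) (σ : Strategy G) (h : List (S × A)) (s : S)
    (X : A → ℝ≥0∞) :
    (∑ a : A, σ.act h s a * X a) = ∑ a ∈ G.actions s, σ.act h s a * X a := by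
  refine (Finset.sum_subset (Finset.subset_univ _) fun a _ ha => ?_).symm
  rw [σ.act_mem h s a ha, zero_mul]

lemma maximizer_strategy (G : SG S A) (r : S → ℝ≥0) {b γ : ℝ} (hb : 1 < b) (hγ : 0 < γ)
    (n : ℕ) : ∃ σ : Strategy G, ∀ (τ : Strategy G) (j : ℕ) (h : List (S × A)) (s : S),
      h.length + j = n → W G σ τ r b γ j h s ≤ val G r b γ j s := by
  have hch : ∀ (j : ℕ) (s : S), ∃ a, a ∈ G.actions s ∧
      (G.actions s).inf' (G.actions_nonempty s)
        (fun a => stp G r b γ s a (val G r b γ j)) = stp G r b γ s a (val G r b γ j) :=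
    fun j s => Finset.exists_mem_eq_inf' (G.actions_nonempty s) _
  choose g hgmem hginf using hch
  refine ⟨detStrategy G (fun h s => g (n - 1 - h.length) s) (fun h s => hgmem _ s), ?_⟩
  intro τ j
  induction j with
  | zero => intro h s _; exact le_refl 1
  | succ j ih =>
    intro h s hlen
    have hidx : n - 1 - h.length = j := by omega
    have hX : ∀ a : A, (∑ s' : S, G.trans s a s' *
        (cc r b γ s' * W G (detStrategy G (fun h s => g (n - 1 - h.length) s)
          (fun h s => hgmem _ s)) τ r b γ j (h ++ [(s, a)]) s')) ≤
        stp G r b γ s a (val G r b γ j) := by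
      intro a
      refine Finset.sum_le_sum fun s' _ => ?_
      refine mul_le_mul_right (mul_le_mul_right ?_ _) _
      exact ih (h ++ [(s, a)]) s' (by simp [List.length_append]; omega)
    rw [W]
    by_cases hs : G.isMax s
    · simp only [hs, if_true, detStrategy_act, hidx]
      rw [sum_det]
      refine le_trans (hX _) ?_
      rw [val, if_pos hs, hginf j s]
    · simp only [hs, Bool.false_eq_true, if_false]
      rw [sum_strat_eq]
      have hval : ∀ a ∈ G.actions s, stp G r b γ s a (val G r b γ j) ≤
          val G r b γ (j+1) s := by
        intro a ha
        rw [val, if_neg hs]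
        exact Finset.le_sup' (fun a => stp G r b γ s a (val G r b γ j)) ha
      refine le_trans (Finset.sum_le_sum fun a ha =>
        mul_le_mul_right ((hX a).trans (hval a ha)) (τ.act h s a)) ?_
      rw [← Finset.sum_mul, τ.act_sum h s, one_mul]

lemma minimizer_strategy (G : SG S A) (r : S → ℝ≥0) {b γ : ℝ} (hb : 1 < b) (hγ : 0 < γ) :
    ∃ τ : Strategy G, ∀ (σ : Strategy G) (n : ℕ) (h : List (S × A)) (s : S),
      Vl G r b γ s ≤ W G σ τ r b γ n h s := by
  have hch : ∀ s : S, ∃ a, a ∈ G.actions s ∧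
      (G.actions s).sup' (G.actions_nonempty s)
        (fun a => stp G r b γ s a (Vl G r b γ)) = stp G r b γ s a (Vl G r b γ) :=
    fun s => Finset.exists_mem_eq_sup' (G.actions_nonempty s) _
  choose g hgmem hgsup using hch
  refine ⟨detStrategy G (fun _ s => g s) (fun _ s => hgmem s), ?_⟩
  intro σ n
  induction n with
  | zero => intro h s; exact Vl_le_one G r hb hγ s
  | succ n ih =>
    intro h s
    have hX : ∀ a : A, stp G r b γ s a (Vl G r b γ) ≤
        ∑ s' : S, G.trans s a s' * (cc r b γ s' * W G σ
          (detStrategy G (fun _ s => g s) (fun _ s => hgmem s)) r b γ n (h ++ [(s, a)]) s') :=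
      fun a => Finset.sum_le_sum fun s' _ =>
        mul_le_mul_right (mul_le_mul_right (ih (h ++ [(s, a)]) s') _) _
    rw [W]
    by_cases hs : G.isMax s
    · simp only [hs, if_true]
      rw [sum_strat_eq]
      calc Vl G r b γ s = (∑ a ∈ G.actions s, σ.act h s a) * Vl G r b γ s := by
            rw [σ.act_sum h s, one_mul]
        _ = ∑ a ∈ G.actions s, σ.act h s a * Vl G r b γ s := by rw [Finset.sum_mul]
        _ ≤ ∑ a ∈ G.actions s, σ.act h s a * _ :=
          Finset.sum_le_sum fun a ha => mul_le_mul_right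
            ((Vl_le_stp_max G r hb hγ s hs ha).trans (hX a)) _
    · simp only [hs, Bool.false_eq_true, if_false, detStrategy_act]
      rw [sum_det]
      exact ((Vl_le_sup'_min G r hb hγ s hs).trans_eq (hgsup s)).trans (hX (g s))

/-- Stochastic games with the negative exponential utility as payoff
function are determined: `inf_σ sup_τ E[b^{−γT}] = sup_τ inf_σ E[b^{−γT}]`. -/
theorem utility_determined (G : SG S A) (r : S → ℝ≥0) (b γ : ℝ)
    (hb : 1 < b) (hγ : 0 < γ) (s : S) :
    (⨅ σ : Strategy G, ⨆ τ : Strategy G, utility G σ τ r b γ s) =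
      ⨆ τ : Strategy G, ⨅ σ : Strategy G, utility G σ τ r b γ s := by
  have key1 : (⨅ σ : Strategy G, ⨆ τ : Strategy G, utility G σ τ r b γ s) ≤
      cc r b γ s * Vl G r b γ s := by
    have h2 : cc r b γ s * Vl G r b γ s = ⨅ n, cc r b γ s * val G r b γ n s := by
      rw [Vl, ENNReal.mul_iInf (fun hc => absurd hc (cc_ne_top r b γ s))]
    rw [h2]
    refine le_iInf fun n => ?_
    obtain ⟨σA, hσA⟩ := maximizer_strategy G r hb hγ n
    refine le_trans (iInf_le _ σA) (iSup_le fun τ => ?_)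
    have hu : utility G σA τ r b γ s = ⨅ m, utilityN G σA τ r b γ s m := rfl
    rw [hu]
    refine le_trans (iInf_le _ n) ?_
    rw [utilityN_eq_W G σA τ r γ hb s n]
    exact mul_le_mul_right (hσA τ n [] s (by simp)) _
  have key2 : cc r b γ s * Vl G r b γ s ≤
      ⨆ τ : Strategy G, ⨅ σ : Strategy G, utility G σ τ r b γ s := by
    obtain ⟨τB, hτB⟩ := minimizer_strategy G r hb hγ
    refine le_trans ?_ (le_iSup _ τB)
    refine le_iInf fun σ => ?_
    have hu : utility G σ τB r b γ s = ⨅ n, utilityN G σ τB r b γ s n := rfl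
    rw [hu]
    refine le_iInf fun n => ?_
    rw [utilityN_eq_W G σ τB r γ hb s n]
    exact mul_le_mul_right (hτB σ n [] s) _
  refine le_antisymm (key1.trans key2) ?_
  exact iSup_le fun τ => le_iInf fun σ =>
    le_trans (iInf_le _ σ) (le_iSup (fun τ' => utility G σ τ' r b γ s) τ)
end

section
/- Entropic risk games capture reachability games: let G be a turn-based stochastic game and T ⊆ S a set of absorbing states (δ(t,a,t) = 1 for all t ∈ T and a ∈ A(t)). Take the reward function r = 1_T (the indicator function of T), risk-aversion factor γ = 1, and any basis b > 1. Then for every state s, the reachability value Val_{G,◇T}(s) := sup_σ inf_τ P^{(σ,τ)}_{G,s}[◇T] satisfies Val_{G,◇T}(s) = 1 − U*_G(s), where σ ranges over all Maximizer strategies and τ over all Minimizer strategies. -/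
open scoped ENNReal NNReal

variable {S A : Type*} [Fintype S] [Fintype A]

-- test lemmas
lemma sum_act_univ (G : SG S A) (st : Strategy G) (h : List (S × A)) (s : S) :
    ∑ a : A, st.act h s a = 1 := by
  rw [← st.act_sum h s]
  exact (Finset.sum_subset (Finset.subset_univ _) fun a _ ha => st.act_mem h s a ha).symm

lemma runProb_sum (G : SG S A) (σ τ : Strategy G) (n : ℕ) :
    ∀ (h : List (S × A)) (s : S),
      ∑ w : Fin n → A × S, runProb G σ τ h s (List.ofFn w) = 1 := by
  induction n with
  | zero => intro h s; simp [runProb]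
  | succ n ih =>
    intro h s
    rw [← (Fin.consEquiv fun _ : Fin (n + 1) => A × S).sum_comp
      (fun w => runProb G σ τ h s (List.ofFn w))]
    rw [Fintype.sum_prod_type]
    have step : ∀ (x : A × S) (w : Fin n → A × S),
        runProb G σ τ h s (List.ofFn ((Fin.consEquiv fun _ : Fin (n+1) => A × S) (x, w))) =
          (if G.isMax s then σ.act h s x.1 else τ.act h s x.1) * G.trans s x.1 x.2 *
            runProb G σ τ (h ++ [(s, x.1)]) x.2 (List.ofFn w) := by
      intro x w
      obtain ⟨a, s'⟩ := x
      rw [show (Fin.consEquiv fun _ : Fin (n+1) => A × S) ((a, s'), w) = Fin.cons (a, s') w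
        from rfl]
      rw [List.ofFn_succ]
      simp [runProb, Fin.cons_zero, Fin.cons_succ]
    simp_rw [step]
    have : ∀ x : A × S, ∑ w : Fin n → A × S,
        (if G.isMax s then σ.act h s x.1 else τ.act h s x.1) * G.trans s x.1 x.2 *
          runProb G σ τ (h ++ [(s, x.1)]) x.2 (List.ofFn w) =
        (if G.isMax s then σ.act h s x.1 else τ.act h s x.1) * G.trans s x.1 x.2 := by
      intro x
      rw [← Finset.mul_sum, ih _ _, mul_one]
    simp_rw [this]
    rw [Fintype.sum_prod_type]
    simp_rw [← Finset.mul_sum, G.trans_sum, mul_one]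
    by_cases hm : G.isMax s <;> simp [hm, sum_act_univ]

def histL (s : S) : List (A × S) → List (S × A)
  | [] => []
  | (a, s') :: l => (s, a) :: histL s' l

def destL (s : S) : List (A × S) → S
  | [] => s
  | (_, s') :: l => destL s' l

lemma runProb_append (G : SG S A) (σ τ : Strategy G) :
    ∀ (l₁ l₂ : List (A × S)) (h : List (S × A)) (s : S),
      runProb G σ τ h s (l₁ ++ l₂) =
        runProb G σ τ h s l₁ * runProb G σ τ (h ++ histL s l₁) (destL s l₁) l₂
  | [], l₂, h, s => by simp [runProb, histL, destL]
  | (a, s') :: l₁, l₂, h, s => by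
    simp only [List.cons_append, runProb, histL, destL]
    rw [runProb_append G σ τ l₁ l₂ (h ++ [(s, a)]) s', List.append_assoc,
      List.singleton_append]
    ring

lemma marginal (G : SG S A) (σ τ : Strategy G) (n m : ℕ) (s : S)
    (g : (Fin n → A × S) → ℝ≥0∞) :
    ∑ w : Fin (n + m) → A × S,
        g (fun i => w (Fin.castAdd m i)) * runProb G σ τ [] s (List.ofFn w) =
      ∑ u : Fin n → A × S, g u * runProb G σ τ [] s (List.ofFn u) := by
  rw [← (Fin.appendEquiv (α := A × S) n m).sum_comp
    (fun w => g (fun i => w (Fin.castAdd m i)) * runProb G σ τ [] s (List.ofFn w))]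
  rw [Fintype.sum_prod_type]
  refine Finset.sum_congr rfl fun u _ => ?_
  have h1 : ∀ v : Fin m → A × S,
      g (fun i => (Fin.appendEquiv (α := A × S) n m) (u, v) (Fin.castAdd m i)) *
          runProb G σ τ [] s (List.ofFn ((Fin.appendEquiv (α := A × S) n m) (u, v))) =
        g u * runProb G σ τ [] s (List.ofFn u) *
          runProb G σ τ ([] ++ histL s (List.ofFn u)) (destL s (List.ofFn u))
            (List.ofFn v) := by
    intro v
    have he : (Fin.appendEquiv (α := A × S) n m) (u, v) = Fin.append u v := rfl
    rw [he]
    have hg : (fun i => Fin.append u v (Fin.castAdd m i)) = u := by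
      funext i; exact Fin.append_left u v i
    rw [hg, List.ofFn_fin_append, runProb_append, mul_assoc]
  simp_rw [h1]
  rw [← Finset.mul_sum, runProb_sum, mul_one]

lemma trans_zero (G : SG S A) {T : Set S}
    (habs : ∀ t ∈ T, ∀ a ∈ G.actions t, G.trans t a t = 1)
    {t : S} (ht : t ∈ T) {a : A} (ha : a ∈ G.actions t) {s' : S} (hs' : s' ≠ t) :
    G.trans t a s' = 0 := by
  classical
  have h1 := G.trans_sum t a
  rw [← Finset.add_sum_erase Finset.univ _ (Finset.mem_univ t), habs t ht a ha] at h1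
  have h2 : (1 : ℝ≥0∞) + ∑ x ∈ Finset.univ.erase t, G.trans t a x = 1 + 0 := by
    rw [add_zero]; exact h1
  have h3 := (ENNReal.add_right_inj (by simp)).mp h2
  exact (Finset.sum_eq_zero_iff.mp h3) s' (Finset.mem_erase.mpr ⟨hs', Finset.mem_univ s'⟩)

lemma act_ne_zero (G : SG S A) (σ τ : Strategy G) {h : List (S × A)} {s : S} {a : A}
    (hne : (if G.isMax s then σ.act h s a else τ.act h s a) ≠ 0) : a ∈ G.actions s := by
  by_contra hm
  by_cases hc : G.isMax s
  · exact hne (by simp [hc, σ.act_mem h s a hm])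
  · exact hne (by simp [hc, τ.act_mem h s a hm])

/-- real-valued reward of a state -/
noncomputable def Rw (T : Set S) (s : S) : ℝ :=
  ((Set.indicator T (fun _ => (1 : ℝ≥0)) s : ℝ≥0) : ℝ)

lemma Rw_mem {T : Set S} {s : S} (hs : s ∈ T) : Rw T s = 1 := by
  simp [Rw, Set.indicator_of_mem hs]

lemma Rw_not_mem {T : Set S} {s : S} (hs : s ∉ T) : Rw T s = 0 := by
  simp [Rw, Set.indicator_of_notMem hs]

lemma Rw_nonneg (T : Set S) (s : S) : 0 ≤ Rw T s := NNReal.coe_nonneg _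

/-- once inside the absorbing set, a positive-probability run stays there and
collects reward 1 at every step -/
lemma stay (G : SG S A) (σ τ : Strategy G) {T : Set S}
    (habs : ∀ t ∈ T, ∀ a ∈ G.actions t, G.trans t a t = 1) :
    ∀ (l : List (A × S)) (h : List (S × A)) (s : S), s ∈ T →
      runProb G σ τ h s l ≠ 0 →
      (l.length : ℝ) ≤ (l.map fun p => Rw T p.2).sum
  | [], h, s, hs, hrp => by simp
  | (a, s') :: l, h, s, hs, hrp => by
    simp only [runProb, ne_eq, mul_eq_zero, not_or] at hrp
    obtain ⟨⟨hact, htr⟩, hrest⟩ := hrp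
    have ha : a ∈ G.actions s := act_ne_zero G σ τ hact
    have hs' : s' = s := by
      by_contra hne
      exact htr (trans_zero G habs hs ha hne)
    have hsT' : s' ∈ T := hs' ▸ hs
    have ih := stay G σ τ habs l (h ++ [(s, a)]) s' hsT' hrest
    simp only [List.map_cons, List.sum_cons, List.length_cons]
    rw [Rw_mem hsT']
    push_cast
    linarith

/-- if the run hits `T` within the first `n` steps then the reward is at least
`length - n` -/
lemma hit_reward (G : SG S A) (σ τ : Strategy G) {T : Set S}
    (habs : ∀ t ∈ T, ∀ a ∈ G.actions t, G.trans t a t = 1) :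
    ∀ (l : List (A × S)) (n : ℕ) (h : List (S × A)) (s : S),
      runProb G σ τ h s l ≠ 0 →
      (s ∈ T ∨ ∃ i : ℕ, ∃ hi : i < l.length, i < n ∧ (l.get ⟨i, hi⟩).2 ∈ T) →
      ((l.length - n : ℕ) : ℝ) ≤ Rw T s + (l.map fun p => Rw T p.2).sum
  | l, n, h, s, hrp, Or.inl hs => by
    have h1 := stay G σ τ habs l h s hs hrp
    have h2 : ((l.length - n : ℕ) : ℝ) ≤ (l.length : ℝ) :=
      Nat.cast_le.mpr (Nat.sub_le _ _)
    rw [Rw_mem hs]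
    linarith
  | [], n, h, s, hrp, Or.inr ⟨i, hi, _, _⟩ => absurd hi (by simp)
  | (a, s') :: l, n, h, s, hrp, Or.inr ⟨i, hi, hin, hiT⟩ => by
    simp only [runProb, ne_eq, mul_eq_zero, not_or] at hrp
    obtain ⟨⟨hact, htr⟩, hrest⟩ := hrp
    simp only [List.map_cons, List.sum_cons, List.length_cons]
    have hnn := Rw_nonneg T s
    match i, hi, hin, hiT with
    | 0, hi, hin, hiT =>
      have hsT' : s' ∈ T := by simpa using hiT
      have h1 := stay G σ τ habs l (h ++ [(s, a)]) s' hsT' hrest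
      have h2 : ((l.length + 1 - n : ℕ) : ℝ) ≤ (l.length : ℝ) + 1 := by
        have h3 : ((l.length + 1 - n : ℕ) : ℝ) ≤ ((l.length + 1 : ℕ) : ℝ) :=
          Nat.cast_le.mpr (Nat.sub_le _ _)
        push_cast at h3
        linarith
      rw [Rw_mem hsT']
      linarith
    | j + 1, hi, hin, hiT =>
      have hi' : j + 1 < l.length + 1 := by simpa using hi
      have hjl : j < l.length := by omega
      have hjT : (l.get ⟨j, hjl⟩).2 ∈ T := by simpa using hiT
      have ih := hit_reward G σ τ habs l (n - 1) (h ++ [(s, a)]) s' hrest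
        (Or.inr ⟨j, hjl, by omega, hjT⟩)
      have hcast : ((l.length + 1 - n : ℕ) : ℝ) ≤ ((l.length - (n - 1) : ℕ) : ℝ) :=
        Nat.cast_le.mpr (by omega)
      linarith

noncomputable def eps (b : ℝ) (m : ℕ) : ℝ≥0∞ := ENNReal.ofReal (b ^ (-(m : ℝ)))

lemma eps_le_one {b : ℝ} (hb : 1 < b) (m : ℕ) : eps b m ≤ 1 := by
  rw [eps, ← ENNReal.ofReal_one]
  exact ENNReal.ofReal_le_ofReal
    (Real.rpow_le_one_of_one_le_of_nonpos hb.le (neg_nonpos.mpr (Nat.cast_nonneg m)))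

lemma iInf_eps {b : ℝ} (hb : 1 < b) : ⨅ m : ℕ, eps b m = 0 := by
  have hb0 : (0 : ℝ) < b := lt_trans one_pos hb
  have heq : ∀ m : ℕ, eps b m = ENNReal.ofReal b⁻¹ ^ m := by
    intro m
    rw [eps, ← ENNReal.ofReal_pow (by positivity)]
    congr 1
    rw [Real.rpow_neg hb0.le, Real.rpow_natCast, ← inv_pow]
  have hx1 : ENNReal.ofReal b⁻¹ < 1 := by
    rw [ENNReal.ofReal_lt_one]
    exact inv_lt_one_of_one_lt₀ hb
  have htd := ENNReal.tendsto_pow_atTop_nhds_zero_of_lt_one hx1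
  have hanti : Antitone fun m : ℕ => ENNReal.ofReal b⁻¹ ^ m := fun i j hij =>
    pow_le_pow_right_of_le_one' hx1.le hij
  simp_rw [heq]
  exact tendsto_nhds_unique (tendsto_atTop_iInf hanti) htd

lemma iSup_one_sub_eps {b : ℝ} (hb : 1 < b) : ⨆ m : ℕ, (1 - eps b m) = 1 := by
  rw [← ENNReal.sub_iInf, iInf_eps hb, tsub_zero]

lemma reachProbN_le_one (G : SG S A) (σ τ : Strategy G) (T : Set S) (s : S) (n : ℕ) :
    reachProbN G σ τ T s n ≤ 1 := by
  rw [reachProbN, ← runProb_sum G σ τ n [] s]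
  refine Finset.sum_le_sum fun w _ => ?_
  by_cases hw : w ∈ {w : Fin n → A × S | s ∈ T ∨ ∃ i, (w i).2 ∈ T}
  · rw [Set.indicator_of_mem hw]
  · rw [Set.indicator_of_notMem hw]; exact zero_le

lemma lower (G : SG S A) (σ τ : Strategy G) (T : Set S) {b : ℝ} (hb : 1 < b)
    (s : S) (n : ℕ) :
    1 ≤ utilityN G σ τ (Set.indicator T fun _ => 1) b 1 s n + reachProbN G σ τ T s n := by
  rw [utilityN, reachProbN, ← Finset.sum_add_distrib, ← runProb_sum G σ τ n [] s]
  refine Finset.sum_le_sum fun w _ => ?_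
  by_cases hw : w ∈ {w : Fin n → A × S | s ∈ T ∨ ∃ i, (w i).2 ∈ T}
  · rw [Set.indicator_of_mem hw]
    exact le_add_self
  · rw [Set.indicator_of_notMem hw, add_zero]
    simp only [Set.mem_setOf_eq, not_or, not_exists] at hw
    have h1 : ∀ y : S, y ∉ T → ((Set.indicator T (fun _ => (1:ℝ≥0)) y : ℝ≥0) : ℝ) = 0 :=
      fun y hy => Rw_not_mem hy
    have hx : ((Set.indicator T (fun _ => (1:ℝ≥0)) s : ℝ≥0) : ℝ) +
        ∑ i, ((Set.indicator T (fun _ => (1:ℝ≥0)) (w i).2 : ℝ≥0) : ℝ) = 0 := by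
      rw [h1 s hw.1, Finset.sum_eq_zero fun i _ => h1 _ (hw.2 i), add_zero]
    rw [hx]
    norm_num

lemma upper (G : SG S A) (σ τ : Strategy G) (T : Set S)
    (habs : ∀ t ∈ T, ∀ a ∈ G.actions t, G.trans t a t = 1)
    {b : ℝ} (hb : 1 < b) (s : S) (n m : ℕ) :
    utilityN G σ τ (Set.indicator T fun _ => 1) b 1 s (n + m) +
      (1 - eps b m) * reachProbN G σ τ T s n ≤ 1 := by
  classical
  set g : (Fin n → A × S) → ℝ≥0∞ :=
    Set.indicator {u : Fin n → A × S | s ∈ T ∨ ∃ i, (u i).2 ∈ T} (fun _ => 1) with hg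
  have hre : reachProbN G σ τ T s n =
      ∑ u : Fin n → A × S, g u * runProb G σ τ [] s (List.ofFn u) := by
    rw [reachProbN]
    refine Finset.sum_congr rfl fun u _ => ?_
    by_cases hu : u ∈ {u : Fin n → A × S | s ∈ T ∨ ∃ i, (u i).2 ∈ T}
    · rw [Set.indicator_of_mem hu, hg, Set.indicator_of_mem hu, one_mul]
    · rw [Set.indicator_of_notMem hu, hg, Set.indicator_of_notMem hu, zero_mul]
  have hmarg := marginal G σ τ n m s (fun u => (1 - eps b m) * g u)
  have hterm2 : (1 - eps b m) * reachProbN G σ τ T s n =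
      ∑ w : Fin (n + m) → A × S,
        (1 - eps b m) * g (fun i => w (Fin.castAdd m i)) *
          runProb G σ τ [] s (List.ofFn w) := by
    rw [hre, Finset.mul_sum, hmarg]
    exact Finset.sum_congr rfl fun u _ => by rw [mul_assoc]
  rw [hterm2, utilityN, ← Finset.sum_add_distrib]
  refine le_trans (Finset.sum_le_sum fun w _ => ?_)
    (le_of_eq (runProb_sum G σ τ (n + m) [] s))
  set P := runProb G σ τ [] s (List.ofFn w) with hP
  by_cases hP0 : P = 0
  · simp [hP0]
  -- reward nonneg
  have hxnn : (0:ℝ) ≤ ((Set.indicator T (fun _ => (1:ℝ≥0)) s : ℝ≥0) : ℝ) +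
      ∑ i, ((Set.indicator T (fun _ => (1:ℝ≥0)) (w i).2 : ℝ≥0) : ℝ) :=
    add_nonneg (Rw_nonneg T s) (Finset.sum_nonneg fun i _ => Rw_nonneg T _)
  by_cases hu : (fun i => w (Fin.castAdd m i)) ∈
      {u : Fin n → A × S | s ∈ T ∨ ∃ i, (u i).2 ∈ T}
  · -- hit within the first n steps: utility factor is at most eps b m
    have hhit : s ∈ T ∨ ∃ i : ℕ, ∃ hi : i < (List.ofFn w).length,
        i < n ∧ ((List.ofFn w).get ⟨i, hi⟩).2 ∈ T := by
      rcases hu with hu | ⟨i, hi⟩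
      · exact Or.inl hu
      · refine Or.inr ⟨(i : ℕ), by simp [i.2.trans_le (Nat.le_add_right n m)], i.2, ?_⟩
        have : (List.ofFn w).get ⟨(i : ℕ), by simp [i.2.trans_le (Nat.le_add_right n m)]⟩ =
            w (Fin.castAdd m i) := by
          simp [List.get_ofFn]
          congr 1
        rw [this]
        exact hi
    have hrew := hit_reward G σ τ habs (List.ofFn w) n [] s hP0 hhit
    have hlen : (List.ofFn w).length = n + m := by simp
    have hsum : ((List.ofFn w).map fun p => Rw T p.2).sum =
        ∑ i, ((Set.indicator T (fun _ => (1:ℝ≥0)) (w i).2 : ℝ≥0) : ℝ) := by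
      rw [List.map_ofFn, List.sum_ofFn]
      rfl
    rw [hlen, hsum] at hrew
    have hm : (m : ℝ) ≤ ((Set.indicator T (fun _ => (1:ℝ≥0)) s : ℝ≥0) : ℝ) +
        ∑ i, ((Set.indicator T (fun _ => (1:ℝ≥0)) (w i).2 : ℝ≥0) : ℝ) := by
      have : ((n + m - n : ℕ) : ℝ) = (m : ℝ) := by norm_num
      rw [this] at hrew
      exact hrew
    have hU : ENNReal.ofReal (b ^ (-(1 * (((Set.indicator T (fun _ => (1:ℝ≥0)) s : ℝ≥0) : ℝ) +
        ∑ i, ((Set.indicator T (fun _ => (1:ℝ≥0)) (w i).2 : ℝ≥0) : ℝ))))) ≤ eps b m := by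
      rw [eps]
      exact ENNReal.ofReal_le_ofReal
        (Real.rpow_le_rpow_of_exponent_le hb.le (by linarith))
    rw [hg, Set.indicator_of_mem hu, mul_one]
    calc P * ENNReal.ofReal _ + (1 - eps b m) * P
        ≤ P * eps b m + (1 - eps b m) * P := by
          exact add_le_add_left (mul_le_mul_right hU P) _
      _ = (eps b m + (1 - eps b m)) * P := by ring
      _ = 1 * P := by rw [add_tsub_cancel_of_le (eps_le_one hb m)]
      _ = P := one_mul P
  · -- no hit: second term vanishes, utility factor is at most 1
    rw [hg, Set.indicator_of_notMem hu, mul_zero, zero_mul, add_zero]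
    calc P * ENNReal.ofReal (b ^ (-(1 * (((Set.indicator T (fun _ => (1:ℝ≥0)) s : ℝ≥0) : ℝ) +
          ∑ i, ((Set.indicator T (fun _ => (1:ℝ≥0)) (w i).2 : ℝ≥0) : ℝ)))))
        ≤ P * 1 := by
          refine mul_le_mul_right ?_ P
          rw [← ENNReal.ofReal_one]
          exact ENNReal.ofReal_le_ofReal
            (Real.rpow_le_one_of_one_le_of_nonpos hb.le (by linarith))
      _ = P := mul_one P

lemma utility_eq (G : SG S A) (σ τ : Strategy G) (T : Set S)
    (habs : ∀ t ∈ T, ∀ a ∈ G.actions t, G.trans t a t = 1)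
    {b : ℝ} (hb : 1 < b) (s : S) :
    utility G σ τ (Set.indicator T fun _ => 1) b 1 s = 1 - reachProb G σ τ T s := by
  refine le_antisymm ?_ ?_
  · rw [reachProb, ENNReal.sub_iSup ENNReal.one_ne_top]
    refine le_iInf fun n => ?_
    have hfin : reachProbN G σ τ T s n ≠ ∞ :=
      ((reachProbN_le_one G σ τ T s n).trans_lt ENNReal.one_lt_top).ne
    refine (ENNReal.cancel_of_ne hfin).le_tsub_of_add_le_right ?_
    calc utility G σ τ (Set.indicator T fun _ => 1) b 1 s + reachProbN G σ τ T s n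
        = utility G σ τ (Set.indicator T fun _ => 1) b 1 s +
            (⨆ m : ℕ, (1 - eps b m)) * reachProbN G σ τ T s n := by
          rw [iSup_one_sub_eps hb, one_mul]
      _ = utility G σ τ (Set.indicator T fun _ => 1) b 1 s +
            ⨆ m : ℕ, (1 - eps b m) * reachProbN G σ τ T s n := by
          rw [ENNReal.iSup_mul]
      _ = ⨆ m : ℕ, (utility G σ τ (Set.indicator T fun _ => 1) b 1 s +
            (1 - eps b m) * reachProbN G σ τ T s n) := ENNReal.add_iSup _
      _ ≤ 1 := by
          refine iSup_le fun m => ?_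
          refine le_trans (add_le_add_left ?_ _) (upper G σ τ T habs hb s n m)
          exact iInf_le _ (n + m)
  · rw [reachProb, ENNReal.sub_iSup ENNReal.one_ne_top, utility]
    exact le_iInf fun n => le_trans (iInf_le _ n)
      (tsub_le_iff_right.mpr (lower G σ τ T hb s n))

lemma reachProb_eq (G : SG S A) (σ τ : Strategy G) (T : Set S)
    (habs : ∀ t ∈ T, ∀ a ∈ G.actions t, G.trans t a t = 1)
    {b : ℝ} (hb : 1 < b) (s : S) :
    reachProb G σ τ T s = 1 - utility G σ τ (Set.indicator T fun _ => 1) b 1 s := by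
  rw [utility_eq G σ τ T habs hb s,
    ENNReal.sub_sub_cancel ENNReal.one_ne_top (show reachProb G σ τ T s ≤ 1 from iSup_le (reachProbN_le_one G σ τ T s))]

/-- Entropic risk games capture reachability games: for an absorbing
target set `T`, with reward `r = 1_T`, risk-aversion factor `γ = 1` and any basis
`b > 1`, the reachability value satisfies `Val_{G,◇T}(s) = 1 − U*_G(s)`. -/
theorem reachVal_eq_one_sub_Ustar (G : SG S A) (T : Set S)
    (habs : ∀ t ∈ T, ∀ a ∈ G.actions t, G.trans t a t = 1)
    (b : ℝ) (hb : 1 < b) (s : S) :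
    (⨆ σ : Strategy G, ⨅ τ : Strategy G, reachProb G σ τ T s) =
      1 - Ustar G (Set.indicator T fun _ => (1 : ℝ≥0)) b 1 s := by
  classical
  haveI : Nonempty (Strategy G) :=
    ⟨Strategy.ofMD G (fun s => (G.actions_nonempty s).choose)
      (fun s => (G.actions_nonempty s).choose_spec)⟩
  calc (⨆ σ : Strategy G, ⨅ τ : Strategy G, reachProb G σ τ T s)
      = ⨆ σ : Strategy G, ⨅ τ : Strategy G,
          (1 - utility G σ τ (Set.indicator T fun _ => (1 : ℝ≥0)) b 1 s) :=
        iSup_congr fun σ => iInf_congr fun τ => reachProb_eq G σ τ T habs hb s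
    _ = ⨆ σ : Strategy G, (1 - ⨆ τ : Strategy G,
          utility G σ τ (Set.indicator T fun _ => (1 : ℝ≥0)) b 1 s) :=
        iSup_congr fun σ => (ENNReal.sub_iSup ENNReal.one_ne_top).symm
    _ = 1 - ⨅ σ : Strategy G, ⨆ τ : Strategy G,
          utility G σ τ (Set.indicator T fun _ => (1 : ℝ≥0)) b 1 s :=
        ENNReal.sub_iInf.symm
    _ = 1 - Ustar G (Set.indicator T fun _ => (1 : ℝ≥0)) b 1 s := rfl
end

section
/- Memoryless deterministic strategies suffice to optimize the entropic risk in stochastic games: for every turn-based stochastic game G, reward function r : S → [0,∞), basis b > 1, and factor γ > 0, there exists an MD Maximizer strategy σ such that for every state s, ERisk*(s) = inf_τ ERisk_{G,s}(σ,τ) (infimum over all Minimizer strategies τ), and there exists an MD Minimizer strategy τ such that for every state s, ERisk*(s) = sup_σ ERisk_{G,s}(σ,τ) (supremum over all Maximizer strategies σ). -/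
open scoped ENNReal NNReal

variable {S A : Type*} [Fintype S] [Fintype A]

namespace EntRisk
set_option linter.unusedSectionVars false

variable (G : SG S A) (r : S → ℝ≥0) (b γ : ℝ)

/-- one-step discount factor -/
noncomputable def cE (s : S) : ℝ≥0∞ := ENNReal.ofReal (b ^ (-(γ * (r s : ℝ))))

lemma trans_le_one (s : S) (a : A) (s' : S) : G.trans s a s' ≤ 1 := by
  rw [← G.trans_sum s a]
  exact Finset.single_le_sum (fun i _ => zero_le) (Finset.mem_univ s')

lemma trans_ne_top (s : S) (a : A) (s' : S) : G.trans s a s' ≠ ∞ :=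
  ne_top_of_le_ne_top ENNReal.one_ne_top (trans_le_one G s a s')

variable {b γ}

lemma cE_ne_zero (hb : 1 < b) (s : S) : cE r b γ s ≠ 0 := by
  simp only [cE, ne_eq, ENNReal.ofReal_eq_zero, not_le]
  exact Real.rpow_pos_of_pos (lt_trans one_pos hb) _

lemma cE_le_one (hb : 1 < b) (hγ : 0 < γ) (s : S) : cE r b γ s ≤ 1 := by
  rw [cE, ← ENNReal.ofReal_one]
  refine ENNReal.ofReal_le_ofReal ?_
  refine Real.rpow_le_one_of_one_le_of_nonpos hb.le ?_
  simp only [neg_nonpos]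
  positivity

lemma cE_ne_top (hb : 1 < b) (hγ : 0 < γ) (s : S) : cE r b γ s ≠ ∞ :=
  ne_top_of_le_ne_top ENNReal.one_ne_top (cE_le_one r hb hγ s)

variable {G r}

/-- shift a strategy by prepending a fixed history entry -/
def shiftS (σ : Strategy G) (p : S × A) : Strategy G where
  act := fun h => σ.act (p :: h)
  act_sum := fun h s => σ.act_sum (p :: h) s
  act_mem := fun h => σ.act_mem (p :: h)

lemma act_total (σ : Strategy G) (h : List (S × A)) (s : S) :
    ∑ a : A, σ.act h s a = 1 := by
  rw [← σ.act_sum h s]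
  symm
  apply Finset.sum_subset (Finset.subset_univ _)
  intro a _ ha
  exact σ.act_mem h s a ha

lemma runProb_cons (σ τ : Strategy G) (h : List (S × A)) (s : S) (a : A) (s' : S)
    (w : List (A × S)) :
    runProb G σ τ h s ((a, s') :: w) =
      (if G.isMax s then σ.act h s a else τ.act h s a) * G.trans s a s' *
        runProb G σ τ (h ++ [(s, a)]) s' w := rfl

lemma runProb_shift (σ τ : Strategy G) (p : S × A) :
    ∀ (w : List (A × S)) (h : List (S × A)) (s : S),
      runProb G σ τ (p :: h) s w = runProb G (shiftS σ p) (shiftS τ p) h s w := by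
  intro w
  induction w with
  | nil => intro h s; rfl
  | cons x w ih =>
    intro h s
    obtain ⟨a, s'⟩ := x
    rw [runProb_cons, runProb_cons]
    have : p :: h ++ [(s, a)] = p :: (h ++ [(s, a)]) := rfl
    rw [this, ih]
    rfl


lemma utilityN_succ (hb : 1 < b) (σ τ : Strategy G) (s : S) (n : ℕ) :
    utilityN G σ τ r b γ s (n+1) =
      cE r b γ s * ∑ a : A, (if G.isMax s then σ.act [] s a else τ.act [] s a) *
        ∑ s' : S, G.trans s a s' *
          utilityN G (shiftS σ (s,a)) (shiftS τ (s,a)) r b γ s' n := by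
  have hb0 : (0:ℝ) < b := lt_trans one_pos hb
  rw [utilityN, ← Equiv.sum_comp (Fin.consEquiv (fun _ : Fin (n+1) => A × S))]
  rw [Fintype.sum_prod_type]
  rw [Fintype.sum_prod_type]
  rw [Finset.mul_sum]
  refine Finset.sum_congr rfl (fun a _ => ?_)
  rw [Finset.mul_sum, Finset.mul_sum]
  refine Finset.sum_congr rfl (fun s' _ => ?_)
  rw [utilityN, Finset.mul_sum, Finset.mul_sum, Finset.mul_sum]
  refine Finset.sum_congr rfl (fun w _ => ?_)
  have h1 : List.ofFn (Fin.consEquiv (fun _ : Fin (n+1) => A × S) ((a, s'), w)) =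
      (a, s') :: List.ofFn w := by
    simp [List.ofFn_succ, Fin.consEquiv]
  have h2 : ∀ i : Fin (n+1),
      (Fin.consEquiv (fun _ : Fin (n+1) => A × S) ((a, s'), w)) i = (Fin.cons (a,s') w : Fin (n+1) → A × S) i := fun i => rfl
  rw [h1, runProb_cons]
  have h3 : ([] : List (S × A)) ++ [(s, a)] = (s,a) :: [] := rfl
  rw [h3, runProb_shift]
  have h4 : ∑ i : Fin (n+1),
      ((r ((Fin.consEquiv (fun _ : Fin (n+1) => A × S) ((a, s'), w)) i).2 : ℝ))
      = (r s' : ℝ) + ∑ i : Fin n, (r (w i).2 : ℝ) := by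
    simp only [h2]
    rw [Fin.sum_univ_succ]
    simp
  rw [h4]
  have h5 : (-(γ * ((r s : ℝ) + ((r s' : ℝ) + ∑ i : Fin n, (r (w i).2 : ℝ)))))
      = (-(γ * (r s : ℝ))) + (-(γ * ((r s' : ℝ) + ∑ i : Fin n, (r (w i).2 : ℝ)))) := by
    ring
  rw [h5, Real.rpow_add hb0, ENNReal.ofReal_mul (Real.rpow_pos_of_pos hb0 _).le]
  rw [cE]
  ring


lemma utilityN_zero (σ τ : Strategy G) (s : S) :
    utilityN G σ τ r b γ s 0 = cE r b γ s := by
  haveI : Unique (Fin 0 → A × S) := ⟨⟨Fin.elim0⟩, fun w => funext fun i => i.elim0⟩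
  rw [utilityN, Fintype.sum_unique]
  simp [List.ofFn_zero, runProb, cE]

lemma utilityN_antitone (hb : 1 < b) (hγ : 0 < γ) :
    ∀ (n : ℕ) (σ τ : Strategy G) (s : S),
      utilityN G σ τ r b γ s (n+1) ≤ utilityN G σ τ r b γ s n := by
  intro n
  induction n with
  | zero =>
    intro σ τ s
    rw [utilityN_zero, utilityN_succ (r := r) hb]
    calc cE r b γ s * ∑ a : A, (if G.isMax s then σ.act [] s a else τ.act [] s a) *
          ∑ s' : S, G.trans s a s' * utilityN G (shiftS σ (s,a)) (shiftS τ (s,a)) r b γ s' 0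
        ≤ cE r b γ s * ∑ a : A, (if G.isMax s then σ.act [] s a else τ.act [] s a) *
          ∑ s' : S, G.trans s a s' * 1 := by
          gcongr with a _ s' _
          rw [utilityN_zero]
          exact cE_le_one r hb hγ s'
      _ = cE r b γ s := by
          simp only [mul_one, G.trans_sum]
          have hone : ∑ a : A, (if G.isMax s = true then σ.act [] s a else τ.act [] s a) = 1 := by
            by_cases hM : G.isMax s = true
            · simp only [hM, if_true]; exact act_total σ [] s
            · simp only [hM, if_false]; exact act_total τ [] s
          rw [hone, mul_one]
  | succ n ih =>
    intro σ τ s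
    rw [utilityN_succ (r := r) hb, utilityN_succ (r := r) hb]
    gcongr with a _ s' _
    exact ih _ _ _


lemma utilityN_le_one (hb : 1 < b) (hγ : 0 < γ) (σ τ : Strategy G) (s : S) (n : ℕ) :
    utilityN G σ τ r b γ s n ≤ 1 := by
  induction n with
  | zero => rw [utilityN_zero]; exact cE_le_one r hb hγ s
  | succ n ih =>
    exact le_trans (utilityN_antitone (r := r) hb hγ n σ τ s) ih

/-- finite-horizon optimal values (value iteration from 1) -/
noncomputable def val (G : SG S A) (r : S → ℝ≥0) (b γ : ℝ) : ℕ → S → ℝ≥0∞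
  | 0 => fun _ => 1
  | (k+1) => fun s =>
      cE r b γ s *
        (if G.isMax s then
          (G.actions s).inf' (G.actions_nonempty s)
            (fun a => ∑ s' : S, G.trans s a s' * val G r b γ k s')
        else
          (G.actions s).sup' (G.actions_nonempty s)
            (fun a => ∑ s' : S, G.trans s a s' * val G r b γ k s'))

lemma val_succ (k : ℕ) (s : S) :
    val G r b γ (k+1) s =
      cE r b γ s *
        (if G.isMax s then
          (G.actions s).inf' (G.actions_nonempty s)
            (fun a => ∑ s' : S, G.trans s a s' * val G r b γ k s')
        else
          (G.actions s).sup' (G.actions_nonempty s)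
            (fun a => ∑ s' : S, G.trans s a s' * val G r b γ k s')) := rfl

lemma val_le_one (hb : 1 < b) (hγ : 0 < γ) (k : ℕ) (s : S) :
    val G r b γ k s ≤ 1 := by
  induction k generalizing s with
  | zero => exact le_refl 1
  | succ k ih =>
    rw [val_succ]
    have hsum : ∀ a, ∑ s' : S, G.trans s a s' * val G r b γ k s' ≤ 1 := by
      intro a
      calc ∑ s' : S, G.trans s a s' * val G r b γ k s'
          ≤ ∑ s' : S, G.trans s a s' * 1 := by gcongr with s' _; exact ih s'
        _ = 1 := by simp [G.trans_sum]
    calc cE r b γ s * _ ≤ 1 * 1 := by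
          refine mul_le_mul' (cE_le_one r hb hγ s) ?_
          split
          · exact le_trans (Finset.inf'_le _ (G.actions_nonempty s).choose_spec) (hsum _)
          · exact Finset.sup'_le _ _ (fun a _ => hsum a)
      _ = 1 := one_mul 1

lemma val_antitone (hb : 1 < b) (hγ : 0 < γ) (k : ℕ) (s : S) :
    val G r b γ (k+1) s ≤ val G r b γ k s := by
  induction k generalizing s with
  | zero => exact val_le_one hb hγ 1 s
  | succ k ih =>
    rw [val_succ, val_succ]
    have hstep : ∀ a, (∑ s' : S, G.trans s a s' * val G r b γ (k+1) s')
        ≤ ∑ s' : S, G.trans s a s' * val G r b γ k s' := by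
      intro a; gcongr with s' _; exact ih s'
    gcongr cE r b γ s * ?_
    split
    · exact Finset.le_inf' _ _ (fun a ha => le_trans (Finset.inf'_le _ ha) (hstep a))
    · exact Finset.sup'_le _ _ (fun a ha => le_trans (hstep a) (Finset.le_sup' (fun a => ∑ s' : S, G.trans s a s' * val G r b γ k s') ha))

/-- the (candidate) optimal utility value -/
noncomputable def vstar (G : SG S A) (r : S → ℝ≥0) (b γ : ℝ) (s : S) : ℝ≥0∞ :=
  ⨅ k, val G r b γ k s

lemma vstar_le_val (k : ℕ) (s : S) : vstar G r b γ s ≤ val G r b γ k s := iInf_le _ k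

lemma vstar_le_one (s : S) : vstar G r b γ s ≤ 1 := vstar_le_val 0 s

lemma val_le_val (hb : 1 < b) (hγ : 0 < γ) {j k : ℕ} (h : k ≤ j) (s : S) :
    val G r b γ j s ≤ val G r b γ k s := by
  induction j with
  | zero => cases Nat.le_zero.mp h; exact le_refl _
  | succ j ih =>
    rcases Nat.lt_or_ge k (j+1) with h' | h'
    · exact le_trans (val_antitone hb hγ j s) (ih (Nat.lt_succ_iff.mp h'))
    · have : k = j + 1 := le_antisymm h h'
      subst this; exact le_refl _

/-- antitone inf commutes with finite sums in `ℝ≥0∞` -/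
lemma finsetSum_iInf {ι : Type*} (t : Finset ι) (F : ι → ℕ → ℝ≥0∞)
    (hF : ∀ i, Antitone (F i)) :
    ∑ i ∈ t, ⨅ k, F i k = ⨅ k, ∑ i ∈ t, F i k := by
  classical
  induction t using Finset.induction_on with
  | empty => simp
  | insert a t hnot ih =>
    rw [Finset.sum_insert hnot]
    rw [ih]
    rw [ENNReal.iInf_add_iInf]
    · exact iInf_congr (fun k => by rw [Finset.sum_insert hnot])
    · intro i j
      refine ⟨max i j, add_le_add (hF a (le_max_left i j)) ?_⟩
      exact Finset.sum_le_sum (fun i' _ => hF i' (le_max_right i j))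

lemma mul_iInf' (x : ℝ≥0∞) (hx : x ≠ ∞) (F : ℕ → ℝ≥0∞) :
    x * ⨅ k, F k = ⨅ k, x * F k :=
  ENNReal.mul_iInf (fun h => absurd h hx)

/-- continuity of the one-step expected value under antitone limits -/
lemma step_iInf (hb : 1 < b) (hγ : 0 < γ) (s : S) (a : A) :
    cE r b γ s * ∑ s' : S, G.trans s a s' * vstar G r b γ s' =
      ⨅ k, cE r b γ s * ∑ s' : S, G.trans s a s' * val G r b γ k s' := by
  rw [← mul_iInf' _ (cE_ne_top r hb hγ s)]
  congr 1
  rw [← finsetSum_iInf]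
  · exact Finset.sum_congr rfl (fun s' _ => mul_iInf' _ (trans_ne_top G s a s') _)
  · intro s' j k hjk
    exact mul_le_mul_right (val_le_val hb hγ hjk s') _

/-- pigeonhole: some value of a finite-codomain sequence occurs cofinally -/
lemma exists_cofinal {α : Type*} [Finite α] (h : ℕ → α) :
    ∃ a, ∀ i, ∃ j, i ≤ j ∧ h j = a := by
  by_contra hc
  push_neg at hc
  choose idx hidx using hc
  haveI := Fintype.ofFinite α
  set N := Finset.univ.sup idx with hN
  exact hidx (h N) N (Finset.le_sup (Finset.mem_univ _)) rfl


lemma step_le_one (hb : 1 < b) (hγ : 0 < γ) (s : S) (a : A) {w : S → ℝ≥0∞}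
    (hw : ∀ s', w s' ≤ 1) :
    cE r b γ s * ∑ s' : S, G.trans s a s' * w s' ≤ 1 := by
  calc cE r b γ s * ∑ s' : S, G.trans s a s' * w s'
      ≤ 1 * ∑ s' : S, G.trans s a s' * 1 := by
        gcongr with s' _
        · exact cE_le_one r hb hγ s
        · exact hw s'
    _ = 1 := by simp [G.trans_sum]

lemma step_ne_top (hb : 1 < b) (hγ : 0 < γ) (s : S) (a : A) {w : S → ℝ≥0∞}
    (hw : ∀ s', w s' ≤ 1) :
    cE r b γ s * ∑ s' : S, G.trans s a s' * w s' ≠ ∞ :=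
  ne_top_of_le_ne_top ENNReal.one_ne_top (step_le_one hb hγ s a hw)

lemma vstar_le_step_max (hb : 1 < b) (hγ : 0 < γ) (s : S) (hs : G.isMax s)
    (a : A) (ha : a ∈ G.actions s) :
    vstar G r b γ s ≤ cE r b γ s * ∑ s' : S, G.trans s a s' * vstar G r b γ s' := by
  rw [step_iInf hb hγ]
  refine le_iInf (fun k => ?_)
  refine le_trans (vstar_le_val (k+1) s) ?_
  rw [val_succ, if_pos hs]
  exact mul_le_mul_right (Finset.inf'_le _ ha) _

lemma step_le_vstar_min (hb : 1 < b) (hγ : 0 < γ) (s : S) (hs : ¬ (G.isMax s = true))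
    (a : A) (ha : a ∈ G.actions s) :
    cE r b γ s * ∑ s' : S, G.trans s a s' * vstar G r b γ s' ≤ vstar G r b γ s := by
  refine le_iInf (fun k => ?_)
  cases k with
  | zero => exact step_le_one hb hγ s a (fun s' => vstar_le_one s')
  | succ k =>
    rw [val_succ, if_neg hs]
    refine mul_le_mul_right ?_ _
    refine le_trans ?_ (Finset.le_sup' (fun a => ∑ s' : S, G.trans s a s' * val G r b γ k s') ha)
    gcongr with s' _
    exact vstar_le_val k s'

lemma exists_min_opt (hb : 1 < b) (hγ : 0 < γ) (s : S) (hs : ¬ (G.isMax s = true)) :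
    ∃ a ∈ G.actions s,
      vstar G r b γ s ≤ cE r b γ s * ∑ s' : S, G.trans s a s' * vstar G r b γ s' := by
  have hsel : ∀ k : ℕ, ∃ a : {a // a ∈ G.actions s},
      (G.actions s).sup' (G.actions_nonempty s)
        (fun a => ∑ s' : S, G.trans s a s' * val G r b γ k s')
      = ∑ s' : S, G.trans s (a : A) s' * val G r b γ k s' := by
    intro k
    obtain ⟨a, ha, h⟩ := Finset.exists_mem_eq_sup' (G.actions_nonempty s)
      (fun a => ∑ s' : S, G.trans s a s' * val G r b γ k s')
    exact ⟨⟨a, ha⟩, h⟩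
  choose sel hselspec using hsel
  obtain ⟨a, hcof⟩ := exists_cofinal sel
  refine ⟨a, a.2, ?_⟩
  rw [step_iInf hb hγ]
  refine le_iInf (fun k => ?_)
  obtain ⟨j, hjk, hja⟩ := hcof k
  calc vstar G r b γ s ≤ val G r b γ (j+1) s := vstar_le_val (j+1) s
    _ = cE r b γ s * ∑ s' : S, G.trans s (a : A) s' * val G r b γ j s' := by
        rw [val_succ, if_neg hs, hselspec j, hja]
    _ ≤ cE r b γ s * ∑ s' : S, G.trans s (a : A) s' * val G r b γ k s' := by
        gcongr with s' _
        exact val_le_val hb hγ hjk s'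

lemma exists_max_opt (hb : 1 < b) (hγ : 0 < γ) (s : S) (hs : G.isMax s) :
    ∃ a ∈ G.actions s,
      cE r b γ s * ∑ s' : S, G.trans s a s' * vstar G r b γ s' = vstar G r b γ s := by
  have hsel : ∀ k : ℕ, ∃ a : {a // a ∈ G.actions s},
      (G.actions s).inf' (G.actions_nonempty s)
        (fun a => ∑ s' : S, G.trans s a s' * val G r b γ k s')
      = ∑ s' : S, G.trans s (a : A) s' * val G r b γ k s' := by
    intro k
    obtain ⟨a, ha, h⟩ := Finset.exists_mem_eq_inf' (G.actions_nonempty s)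
      (fun a => ∑ s' : S, G.trans s a s' * val G r b γ k s')
    exact ⟨⟨a, ha⟩, h⟩
  choose sel hselspec using hsel
  obtain ⟨a, hcof⟩ := exists_cofinal sel
  refine ⟨a, a.2, le_antisymm ?_ (vstar_le_step_max hb hγ s hs a a.2)⟩
  refine le_iInf (fun k => ?_)
  obtain ⟨j, hjk, hja⟩ := hcof k
  calc cE r b γ s * ∑ s' : S, G.trans s (a : A) s' * vstar G r b γ s'
      ≤ cE r b γ s * ∑ s' : S, G.trans s (a : A) s' * val G r b γ j s' := by
        gcongr with s' _
        exact vstar_le_val j s'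
    _ = val G r b γ (j+1) s := by rw [val_succ, if_pos hs, hselspec j, hja]
    _ ≤ val G r b γ k s := val_le_val hb hγ (le_trans hjk (Nat.le_succ j)) s

lemma vstar_le_cE (hb : 1 < b) (hγ : 0 < γ) (s : S) :
    vstar G r b γ s ≤ cE r b γ s := by
  refine le_trans (vstar_le_val 1 s) ?_
  rw [val_succ]
  have hone : ∀ a, ∑ s' : S, G.trans s a s' * val G r b γ 0 s' = 1 := by
    intro a; simp [val, G.trans_sum]
  split
  · calc _ ≤ cE r b γ s * (∑ s' : S, G.trans s ((G.actions_nonempty s).choose) s' * val G r b γ 0 s') :=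
        mul_le_mul_right (Finset.inf'_le _ (G.actions_nonempty s).choose_spec) _
      _ = cE r b γ s := by rw [hone, mul_one]
  · refine le_of_eq ?_
    rw [Finset.sup'_congr (G.actions_nonempty s) rfl (fun a _ => hone a)]
    simp

variable [DecidableEq A]

/-- `σ` is the MD strategy given by `f`, at every history -/
def IsMDAt (f : S → A) (σ : Strategy G) : Prop :=
  ∀ h s a, σ.act h s a = if a = f s then 1 else 0

lemma isMDAt_shift {f : S → A} {σ : Strategy G} (h : IsMDAt f σ) (p : S × A) :
    IsMDAt f (shiftS σ p) := fun h' s a => h (p :: h') s a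

lemma isMDAt_ofMD (f : S → A) (hf : ∀ s, f s ∈ G.actions s) :
    IsMDAt f (_root_.Strategy.ofMD G f hf) := fun _ _ _ => rfl

lemma sum_ite_one (a₀ : A) (f : A → ℝ≥0∞) :
    ∑ a : A, (if a = a₀ then (1:ℝ≥0∞) else 0) * f a = f a₀ := by
  rw [Finset.sum_congr rfl (fun a _ => by rw [ite_mul, one_mul, zero_mul])]
  simp [Finset.sum_ite_eq']

lemma sum_act_ge {s : S} (π : A → ℝ≥0∞) (hπ : ∑ a : A, π a = 1)
    (hπ0 : ∀ a, a ∉ G.actions s → π a = 0) (Z : A → ℝ≥0∞) (B : ℝ≥0∞)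
    (hZ : ∀ a ∈ G.actions s, B ≤ Z a) : B ≤ ∑ a : A, π a * Z a := by
  classical
  calc B = ∑ a : A, π a * B := by rw [← Finset.sum_mul, hπ, one_mul]
    _ ≤ ∑ a : A, π a * Z a := by
        refine Finset.sum_le_sum (fun a _ => ?_)
        by_cases ha : a ∈ G.actions s
        · exact mul_le_mul_right (hZ a ha) _
        · simp [hπ0 a ha]

lemma sum_act_le {s : S} (π : A → ℝ≥0∞) (hπ : ∑ a : A, π a = 1)
    (hπ0 : ∀ a, a ∉ G.actions s → π a = 0) (Z : A → ℝ≥0∞) (B : ℝ≥0∞)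
    (hZ : ∀ a ∈ G.actions s, Z a ≤ B) : ∑ a : A, π a * Z a ≤ B := by
  classical
  calc ∑ a : A, π a * Z a ≤ ∑ a : A, π a * B := by
        refine Finset.sum_le_sum (fun a _ => ?_)
        by_cases ha : a ∈ G.actions s
        · exact mul_le_mul_right (hZ a ha) _
        · simp [hπ0 a ha]
    _ = B := by rw [← Finset.sum_mul, hπ, one_mul]

/-- The Minimizer MD strategy guarantees the value from below. -/
lemma min_side (hb : 1 < b) (hγ : 0 < γ) (g : S → A)
    (hgopt : ∀ s, ¬(G.isMax s = true) →
      vstar G r b γ s ≤ cE r b γ s * ∑ s' : S, G.trans s (g s) s' * vstar G r b γ s') :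
    ∀ (n : ℕ) (σ τ : Strategy G), IsMDAt g τ → ∀ s,
      vstar G r b γ s ≤ utilityN G σ τ r b γ s n := by
  intro n
  induction n with
  | zero =>
    intro σ τ hτ s
    rw [utilityN_zero]
    exact vstar_le_cE hb hγ s
  | succ n ih =>
    intro σ τ hτ s
    rw [utilityN_succ (r := r) hb]
    by_cases hM : G.isMax s = true
    · simp only [hM, if_true]
      rw [Finset.mul_sum, Finset.sum_congr rfl (fun a _ => mul_left_comm (cE r b γ s) _ _)]
      refine sum_act_ge (s := s) _ (act_total σ [] s) (σ.act_mem [] s) _ _ (fun a ha => ?_)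
      refine le_trans (vstar_le_step_max hb hγ s hM a ha) ?_
      gcongr with s' _
      exact ih (shiftS σ (s,a)) (shiftS τ (s,a)) (isMDAt_shift hτ _) s'
    · rw [Finset.sum_congr rfl (fun a _ => by rw [if_neg hM, hτ [] s a]), sum_ite_one]
      refine le_trans (hgopt s hM) ?_
      gcongr with s' _
      exact ih (shiftS σ (s, g s)) (shiftS τ (s, g s)) (isMDAt_shift hτ _) s'

/-- value iteration where the Maximizer is fixed to play `f` -/
noncomputable def fval (G : SG S A) (r : S → ℝ≥0) (b γ : ℝ) (f : S → A) : ℕ → S → ℝ≥0∞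
  | 0 => fun _ => 1
  | (n+1) => fun s =>
      cE r b γ s *
        (if G.isMax s then ∑ s' : S, G.trans s (f s) s' * fval G r b γ f n s'
        else
          (G.actions s).sup' (G.actions_nonempty s)
            (fun a => ∑ s' : S, G.trans s a s' * fval G r b γ f n s'))

lemma fval_succ (f : S → A) (n : ℕ) (s : S) :
    fval G r b γ f (n+1) s =
      cE r b γ s *
        (if G.isMax s then ∑ s' : S, G.trans s (f s) s' * fval G r b γ f n s'
        else
          (G.actions s).sup' (G.actions_nonempty s)
            (fun a => ∑ s' : S, G.trans s a s' * fval G r b γ f n s')) := rfl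

lemma fval_le_one (hb : 1 < b) (hγ : 0 < γ) (f : S → A) (n : ℕ) (s : S) :
    fval G r b γ f n s ≤ 1 := by
  induction n generalizing s with
  | zero => exact le_refl 1
  | succ n ih =>
    rw [fval_succ]
    have hsum : ∀ a, ∑ s' : S, G.trans s a s' * fval G r b γ f n s' ≤ 1 := by
      intro a
      calc ∑ s' : S, G.trans s a s' * fval G r b γ f n s'
          ≤ ∑ s' : S, G.trans s a s' * 1 := by gcongr with s' _; exact ih s'
        _ = 1 := by simp [G.trans_sum]
    calc cE r b γ s * _ ≤ 1 * 1 := by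
          refine mul_le_mul' (cE_le_one r hb hγ s) ?_
          split
          · exact hsum _
          · exact Finset.sup'_le _ _ (fun a _ => hsum a)
      _ = 1 := one_mul 1

lemma fval_antitone (hb : 1 < b) (hγ : 0 < γ) (f : S → A) (n : ℕ) (s : S) :
    fval G r b γ f (n+1) s ≤ fval G r b γ f n s := by
  induction n generalizing s with
  | zero => exact fval_le_one hb hγ f 1 s
  | succ n ih =>
    rw [fval_succ, fval_succ]
    have hstep : ∀ a, (∑ s' : S, G.trans s a s' * fval G r b γ f (n+1) s')
        ≤ ∑ s' : S, G.trans s a s' * fval G r b γ f n s' := by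
      intro a; gcongr with s' _; exact ih s'
    gcongr cE r b γ s * ?_
    split
    · exact hstep _
    · exact Finset.sup'_le _ _ (fun a ha => le_trans (hstep a)
        (Finset.le_sup' (fun a => ∑ s' : S, G.trans s a s' * fval G r b γ f n s') ha))

lemma fval_le_fval (hb : 1 < b) (hγ : 0 < γ) (f : S → A) {j k : ℕ} (h : k ≤ j) (s : S) :
    fval G r b γ f j s ≤ fval G r b γ f k s := by
  induction j with
  | zero => cases Nat.le_zero.mp h; exact le_refl _
  | succ j ih =>
    rcases Nat.lt_or_ge k (j+1) with h' | h'
    · exact le_trans (fval_antitone hb hγ f j s) (ih (Nat.lt_succ_iff.mp h'))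
    · have : k = j + 1 := le_antisymm h h'
      subst this; exact le_refl _

/-- Against the fixed MD strategy `f`, no Minimizer strategy can exceed the
`f`-value iteration. -/
lemma max_side (hb : 1 < b) (hγ : 0 < γ) (f : S → A) :
    ∀ (n : ℕ) (σ τ : Strategy G), IsMDAt f σ → ∀ s,
      utilityN G σ τ r b γ s n ≤ fval G r b γ f (n+1) s := by
  intro n
  induction n with
  | zero =>
    intro σ τ hσ s
    rw [utilityN_zero, fval_succ]
    have hone : ∀ a, ∑ s' : S, G.trans s a s' * fval G r b γ f 0 s' = 1 := by
      intro a; simp [fval, G.trans_sum]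
    split
    · rw [hone, mul_one]
    · rw [Finset.sup'_congr (G.actions_nonempty s) rfl (fun a _ => hone a)]
      simp
  | succ n ih =>
    intro σ τ hσ s
    rw [utilityN_succ (r := r) hb, fval_succ]
    by_cases hM : G.isMax s = true
    · simp only [hM, if_true, hσ [] s]
      rw [sum_ite_one]
      gcongr with s' _
      exact ih (shiftS σ (s, f s)) (shiftS τ (s, f s)) (isMDAt_shift hσ _) s'
    · rw [if_neg hM, Finset.sum_congr rfl (fun a _ => by rw [if_neg hM])]
      rw [Finset.mul_sum, Finset.sum_congr rfl (fun a _ => mul_left_comm (cE r b γ s) _ _)]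
      refine sum_act_le (s := s) _ (act_total τ [] s) (τ.act_mem [] s) _ _ (fun a ha => ?_)
      refine mul_le_mul_right ?_ _
      refine le_trans ?_
        (Finset.le_sup' (fun a => ∑ s' : S, G.trans s a s' * fval G r b γ f (n+1) s') ha)
      gcongr with s' _
      exact ih (shiftS σ (s,a)) (shiftS τ (s,a)) (isMDAt_shift hσ _) s'

/-- the limit of the `f`-value iteration -/
noncomputable def fvstar (G : SG S A) (r : S → ℝ≥0) (b γ : ℝ) (f : S → A) (s : S) : ℝ≥0∞ :=
  ⨅ n, fval G r b γ f n s


lemma fvstar_le_fval (f : S → A) (n : ℕ) (s : S) :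
    fvstar G r b γ f s ≤ fval G r b γ f n s := iInf_le _ n

lemma fvstar_le_one (f : S → A) (s : S) : fvstar G r b γ f s ≤ 1 :=
  fvstar_le_fval f 0 s

/-- generic continuity of the one-step operator under antitone pointwise limits -/
lemma step_iInf_gen (hb : 1 < b) (hγ : 0 < γ) (s : S) (a : A) (W : ℕ → S → ℝ≥0∞)
    (hW : ∀ s', Antitone (fun k => W k s')) :
    cE r b γ s * ∑ s' : S, G.trans s a s' * ⨅ k, W k s' =
      ⨅ k, cE r b γ s * ∑ s' : S, G.trans s a s' * W k s' := by
  rw [← mul_iInf' _ (cE_ne_top r hb hγ s)]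
  congr 1
  rw [← finsetSum_iInf]
  · exact Finset.sum_congr rfl (fun s' _ => mul_iInf' _ (trans_ne_top G s a s') _)
  · intro s' j k hjk
    exact mul_le_mul_right (hW s' hjk) _

lemma fvstar_fix_max (hb : 1 < b) (hγ : 0 < γ) (f : S → A) (s : S) (hs : G.isMax s) :
    fvstar G r b γ f s = cE r b γ s * ∑ s' : S, G.trans s (f s) s' * fvstar G r b γ f s' := by
  refine le_antisymm ?_ ?_
  · simp only [fvstar]
    rw [step_iInf_gen hb hγ s (f s) _ (fun s' j k hjk => fval_le_fval hb hγ f hjk s')]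
    refine le_iInf (fun k => ?_)
    refine le_trans (iInf_le _ (k+1)) ?_
    rw [fval_succ, if_pos hs]
  · refine le_iInf (fun n => ?_)
    cases n with
    | zero => exact step_le_one hb hγ s (f s) (fun s' => fvstar_le_one f s')
    | succ n =>
      rw [fval_succ, if_pos hs]
      gcongr with s' _
      exact fvstar_le_fval f n s'

lemma fvstar_fix_min (hb : 1 < b) (hγ : 0 < γ) (f : S → A) (s : S)
    (hs : ¬ (G.isMax s = true)) :
    ∃ a ∈ G.actions s,
      fvstar G r b γ f s = cE r b γ s * ∑ s' : S, G.trans s a s' * fvstar G r b γ f s' := by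
  have hrev : ∀ a ∈ G.actions s,
      cE r b γ s * ∑ s' : S, G.trans s a s' * fvstar G r b γ f s' ≤ fvstar G r b γ f s := by
    intro a ha
    refine le_iInf (fun n => ?_)
    cases n with
    | zero => exact step_le_one hb hγ s a (fun s' => fvstar_le_one f s')
    | succ n =>
      rw [fval_succ, if_neg hs]
      refine mul_le_mul_right ?_ _
      refine le_trans ?_
        (Finset.le_sup' (fun a => ∑ s' : S, G.trans s a s' * fval G r b γ f n s') ha)
      gcongr with s' _
      exact fvstar_le_fval f n s'
  have hsel : ∀ k : ℕ, ∃ a : {a // a ∈ G.actions s},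
      (G.actions s).sup' (G.actions_nonempty s)
        (fun a => ∑ s' : S, G.trans s a s' * fval G r b γ f k s')
      = ∑ s' : S, G.trans s (a : A) s' * fval G r b γ f k s' := by
    intro k
    obtain ⟨a, ha, h⟩ := Finset.exists_mem_eq_sup' (G.actions_nonempty s)
      (fun a => ∑ s' : S, G.trans s a s' * fval G r b γ f k s')
    exact ⟨⟨a, ha⟩, h⟩
  choose sel hselspec using hsel
  obtain ⟨a, hcof⟩ := exists_cofinal sel
  refine ⟨a, a.2, le_antisymm ?_ (hrev a a.2)⟩
  simp only [fvstar]
  rw [step_iInf_gen hb hγ s (a : A) _ (fun s' j k hjk => fval_le_fval hb hγ f hjk s')]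
  refine le_iInf (fun k => ?_)
  obtain ⟨j, hjk, hja⟩ := hcof k
  calc fvstar G r b γ f s ≤ fval G r b γ f (j+1) s := fvstar_le_fval f (j+1) s
    _ = cE r b γ s * ∑ s' : S, G.trans s (a : A) s' * fval G r b γ f j s' := by
        rw [fval_succ, if_neg hs, hselspec j, hja]
    _ ≤ cE r b γ s * ∑ s' : S, G.trans s (a : A) s' * fval G r b γ f k s' := by
        gcongr with s' _
        exact fval_le_fval hb hγ f hjk s'


lemma vstar_ne_top (s : S) : vstar G r b γ s ≠ ∞ :=
  ne_top_of_le_ne_top ENNReal.one_ne_top (vstar_le_one s)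

lemma val_ne_top (hb : 1 < b) (hγ : 0 < γ) (k : ℕ) (s : S) : val G r b γ k s ≠ ∞ :=
  ne_top_of_le_ne_top ENNReal.one_ne_top (val_le_one hb hγ k s)

lemma fvstar_ne_top (f : S → A) (s : S) : fvstar G r b γ f s ≠ ∞ :=
  ne_top_of_le_ne_top ENNReal.one_ne_top (fvstar_le_one f s)

/-- real transition probabilities -/
noncomputable def dR (G : SG S A) (s : S) (a : A) (s' : S) : ℝ := (G.trans s a s').toReal

lemma dR_nonneg (s : S) (a : A) (s' : S) : 0 ≤ dR G s a s' := ENNReal.toReal_nonneg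

lemma dR_sum (s : S) (a : A) : ∑ s' : S, dR G s a s' = 1 := by
  rw [show (∑ s' : S, dR G s a s') = (∑ s' : S, G.trans s a s').toReal from
    (ENNReal.toReal_sum (fun s' _ => trans_ne_top G s a s')).symm]
  rw [G.trans_sum]
  rfl

lemma dR_pos {s : S} {a : A} {s' : S} (h : G.trans s a s' ≠ 0) : 0 < dR G s a s' :=
  ENNReal.toReal_pos h (trans_ne_top G s a s')

lemma dR_zero {s : S} {a : A} {s' : S} (h : ¬ (G.trans s a s' ≠ 0)) : dR G s a s' = 0 := by
  push_neg at h; simp [dR, h]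

lemma cE_eq_one_of (s : S) (h : r s = 0) : cE r b γ s = 1 := by
  simp [cE, h, Real.rpow_zero]

/-- toReal of the one-step operator, when the discount is trivial -/
lemma step_toReal_one {s : S} (h1 : cE r b γ s = 1) (a : A) (w : S → ℝ≥0∞)
    (hw : ∀ s', w s' ≠ ∞) :
    (cE r b γ s * ∑ s' : S, G.trans s a s' * w s').toReal =
      ∑ s' : S, dR G s a s' * (w s').toReal := by
  rw [h1, one_mul, ENNReal.toReal_sum (fun s' _ => ENNReal.mul_ne_top (trans_ne_top G s a s') (hw s'))]
  exact Finset.sum_congr rfl (fun s' _ => ENNReal.toReal_mul)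

open Classical in
/-- `vstar`-optimal actions at a state -/
noncomputable def AoptF (G : SG S A) (r : S → ℝ≥0) (b γ : ℝ) (s : S) : Finset A :=
  (G.actions s).filter
    (fun a => cE r b γ s * ∑ s' : S, G.trans s a s' * vstar G r b γ s' = vstar G r b γ s)

lemma AoptF_nonempty (hb : 1 < b) (hγ : 0 < γ) (s : S) (hs : G.isMax s) :
    (AoptF G r b γ s).Nonempty := by
  classical
  obtain ⟨a, ha, h⟩ := exists_max_opt hb hγ s hs
  exact ⟨a, Finset.mem_filter.mpr ⟨ha, h⟩⟩

lemma AoptF_subset (s : S) : AoptF G r b γ s ⊆ G.actions s := Finset.filter_subset _ _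

lemma AoptF_spec {s : S} {a : A} (h : a ∈ AoptF G r b γ s) :
    cE r b γ s * ∑ s' : S, G.trans s a s' * vstar G r b γ s' = vstar G r b γ s := by
  classical
  exact (Finset.mem_filter.mp h).2

/-- attractor towards states with reward or value 1, within optimal actions -/
noncomputable def attr (G : SG S A) (r : S → ℝ≥0) (b γ : ℝ) : ℕ → Set S
  | 0 => {s | ¬ r s = 0 ∨ vstar G r b γ s = 1}
  | (i+1) => attr G r b γ i ∪
      {s | if G.isMax s then ∃ a ∈ AoptF G r b γ s, ∃ s', s' ∈ attr G r b γ i ∧ G.trans s a s' ≠ 0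
           else ∀ a ∈ G.actions s, ∃ s', s' ∈ attr G r b γ i ∧ G.trans s a s' ≠ 0}

lemma attr_mono (i j : ℕ) (h : i ≤ j) : attr G r b γ i ⊆ attr G r b γ j := by
  induction j with
  | zero => cases Nat.le_zero.mp h; exact subset_rfl
  | succ j ih =>
    rcases Nat.lt_or_ge i (j+1) with h' | h'
    · exact subset_trans (ih (Nat.lt_succ_iff.mp h')) (Set.subset_union_left)
    · have : i = j + 1 := le_antisymm h h'
      subst this; exact subset_rfl


lemma attr_zero : attr G r b γ 0 = {s | ¬ r s = 0 ∨ vstar G r b γ s = 1} := rfl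

lemma attr_succ (i : ℕ) : attr G r b γ (i+1) = attr G r b γ i ∪
    {s | if G.isMax s then ∃ a ∈ AoptF G r b γ s, ∃ s', s' ∈ attr G r b γ i ∧ G.trans s a s' ≠ 0
         else ∀ a ∈ G.actions s, ∃ s', s' ∈ attr G r b γ i ∧ G.trans s a s' ≠ 0} := rfl

lemma attr_complete (hb : 1 < b) (hγ : 0 < γ) : ∀ s : S, ∃ i, s ∈ attr G r b γ i := by
  classical
  by_contra hc
  push_neg at hc
  obtain ⟨s₀, hs₀⟩ := hc
  set Y : Finset S := Finset.univ.filter (fun s => ∀ i, s ∉ attr G r b γ i) with hYdef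
  have hmemY : ∀ s, s ∈ Y ↔ ∀ i, s ∉ attr G r b γ i := fun s => by
    simp [hYdef]
  have hs₀Y : s₀ ∈ Y := (hmemY s₀).mpr hs₀
  have hYne : Y.Nonempty := ⟨s₀, hs₀Y⟩
  have hY0 : ∀ s ∈ Y, r s = 0 ∧ vstar G r b γ s ≠ 1 := by
    intro s hs
    have h0 := (hmemY s).mp hs 0
    rw [attr_zero, Set.mem_setOf_eq] at h0
    push_neg at h0
    exact ⟨h0.1, h0.2⟩
  have hcE1 : ∀ s ∈ Y, cE r b γ s = 1 := fun s hs => cE_eq_one_of s (hY0 s hs).1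
  have hvlt1 : ∀ s ∈ Y, vstar G r b γ s < 1 := fun s hs =>
    lt_of_le_of_ne (vstar_le_one s) (hY0 s hs).2
  have hYmax : ∀ s ∈ Y, G.isMax s = true → ∀ a ∈ AoptF G r b γ s,
      ∀ s', G.trans s a s' ≠ 0 → s' ∈ Y := by
    intro s hs hM a ha s' hne
    rw [hmemY]
    intro i hi
    have hmem : s ∈ attr G r b γ (i+1) := by
      rw [attr_succ]
      right
      rw [Set.mem_setOf_eq, if_pos hM]
      exact ⟨a, ha, s', hi, hne⟩
    exact (hmemY s).mp hs (i+1) hmem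
  have hYmin : ∀ s ∈ Y, ¬(G.isMax s = true) →
      ∃ a ∈ G.actions s, ∀ s', G.trans s a s' ≠ 0 → s' ∈ Y := by
    intro s hs hM
    have hstep : ∀ i : ℕ, ∃ a : {a // a ∈ G.actions s},
        ∀ s', s' ∈ attr G r b γ i → G.trans s (a : A) s' = 0 := by
      intro i
      have hni := (hmemY s).mp hs (i+1)
      rw [attr_succ] at hni
      have hnr : s ∉ {s | if G.isMax s then
          ∃ a ∈ AoptF G r b γ s, ∃ s', s' ∈ attr G r b γ i ∧ G.trans s a s' ≠ 0
          else ∀ a ∈ G.actions s, ∃ s', s' ∈ attr G r b γ i ∧ G.trans s a s' ≠ 0} :=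
        fun hmem => hni (Set.mem_union_right _ hmem)
      rw [Set.mem_setOf_eq, if_neg hM] at hnr
      push_neg at hnr
      obtain ⟨a, ha, hprop⟩ := hnr
      exact ⟨⟨a, ha⟩, fun s' hs' => hprop s' hs'⟩
    choose sel hsel using hstep
    obtain ⟨a, hcof⟩ := exists_cofinal sel
    refine ⟨a, a.2, fun s' hne => ?_⟩
    rw [hmemY]
    intro i hi
    obtain ⟨j, hij, hj⟩ := hcof i
    have := hsel j s' (attr_mono i j hij hi)
    rw [hj] at this
    exact hne this
  -- real-valued analysis on Y
  set vR : S → ℝ := fun s => (vstar G r b γ s).toReal with hvRdef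
  obtain ⟨sβ, hsβY, hβeq⟩ := Finset.exists_mem_eq_inf' hYne vR
  set β : ℝ := Y.inf' hYne vR with hβdef
  set B : Finset S := Y.filter (fun s => vR s = β) with hBdef
  have hsβB : sβ ∈ B := Finset.mem_filter.mpr ⟨hsβY, hβeq.symm⟩
  have hBY : ∀ s ∈ B, s ∈ Y := fun s hs => (Finset.mem_filter.mp hs).1
  have hBval : ∀ s ∈ B, vR s = β := fun s hs => (Finset.mem_filter.mp hs).2
  have hβle : ∀ s ∈ Y, β ≤ vR s := fun s hs => Finset.inf'_le _ hs
  have hβ1 : β < 1 := by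
    rw [hβeq]
    have h := hvlt1 sβ hsβY
    have := (ENNReal.toReal_lt_toReal (vstar_ne_top sβ) ENNReal.one_ne_top).mpr h
    simpa using this
  have hβ0 : 0 ≤ β := by rw [hβeq]; exact ENNReal.toReal_nonneg
  have hrealMax : ∀ s ∈ Y, G.isMax s = true → ∀ a ∈ G.actions s,
      vR s ≤ ∑ s' : S, dR G s a s' * vR s' := by
    intro s hs hM a ha
    have h := vstar_le_step_max (r := r) hb hγ s hM a ha
    have h2 := ENNReal.toReal_mono (step_ne_top hb hγ s a (fun s' => vstar_le_one s')) h
    rwa [step_toReal_one (hcE1 s hs) a _ (fun s' => vstar_ne_top s')] at h2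
  have hrealMin : ∀ s ∈ Y, ¬(G.isMax s = true) → ∀ a ∈ G.actions s,
      (∑ s' : S, dR G s a s' * vR s') ≤ vR s := by
    intro s hs hM a ha
    have h := step_le_vstar_min (r := r) hb hγ s hM a ha
    have h2 := ENNReal.toReal_mono (vstar_ne_top s) h
    rwa [step_toReal_one (hcE1 s hs) a _ (fun s' => vstar_ne_top s')] at h2
  have hrealOpt : ∀ s ∈ Y, ∀ a ∈ AoptF G r b γ s,
      ∑ s' : S, dR G s a s' * vR s' = vR s := by
    intro s hs a ha
    have h := congrArg ENNReal.toReal (AoptF_spec ha)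
    rwa [step_toReal_one (hcE1 s hs) a _ (fun s' => vstar_ne_top s')] at h
  have hsupp : ∀ s ∈ B, ∀ a : A, (∀ s', G.trans s a s' ≠ 0 → s' ∈ Y) →
      (∑ s' : S, dR G s a s' * vR s') ≤ β → ∀ s', G.trans s a s' ≠ 0 → s' ∈ B := by
    intro s hs a hsuppY hle s₁ hs₁
    have hterm : ∀ s' : S, 0 ≤ dR G s a s' * (vR s' - β) := by
      intro s'
      by_cases h : G.trans s a s' ≠ 0
      · exact mul_nonneg (dR_nonneg (G := G) s a s') (sub_nonneg.mpr (hβle s' (hsuppY s' h)))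
      · rw [dR_zero h, zero_mul]
    have hsumeq : ∑ s' : S, dR G s a s' * (vR s' - β) = (∑ s' : S, dR G s a s' * vR s') - β := by
      rw [Finset.sum_congr rfl (fun s' _ => mul_sub (dR G s a s') (vR s') β),
        Finset.sum_sub_distrib, ← Finset.sum_mul, dR_sum, one_mul]
    have hsum0 : ∑ s' : S, dR G s a s' * (vR s' - β) = 0 := by
      refine le_antisymm (by rw [hsumeq]; linarith) (Finset.sum_nonneg (fun s' _ => hterm s'))
    have heach := (Finset.sum_eq_zero_iff_of_nonneg (fun s' _ => hterm s')).mp hsum0 s₁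
      (Finset.mem_univ s₁)
    have hd := dR_pos (G := G) hs₁
    have hv : vR s₁ - β = 0 := by
      rcases mul_eq_zero.mp heach with h | h
      · exact absurd h (ne_of_gt hd)
      · exact h
    exact Finset.mem_filter.mpr ⟨hsuppY s₁ hs₁, by linarith⟩
  set prs : Finset (S × A) := (B ×ˢ (Finset.univ : Finset A)).filter
      (fun p => G.isMax p.1 = true ∧ p.2 ∈ G.actions p.1 ∧ p.2 ∉ AoptF G r b γ p.1) with hprs
  set Θ : ℝ := if h : prs.Nonempty then
      prs.inf' h (fun p => ∑ s' : S, dR G p.1 p.2 s' * vR s') else 2 with hΘdef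
  have hΘ0 : 0 ≤ Θ := by
    rw [hΘdef]
    split_ifs with h
    · rw [Finset.le_inf'_iff]
      intro p _
      exact Finset.sum_nonneg (fun s' _ => mul_nonneg (dR_nonneg (G := G) _ _ _) ENNReal.toReal_nonneg)
    · norm_num
  have hβΘ : β < Θ := by
    rw [hΘdef]
    split_ifs with h
    · rw [Finset.lt_inf'_iff]
      intro p hp
      rw [hprs, Finset.mem_filter, Finset.mem_product] at hp
      obtain ⟨⟨hpB, -⟩, hpM, hpa, hpno⟩ := hp
      have h1 : vR p.1 ≤ ∑ s' : S, dR G p.1 p.2 s' * vR s' := hrealMax p.1 (hBY _ hpB) hpM p.2 hpa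
      have h2 : vR p.1 = β := hBval _ hpB
      rcases lt_or_eq_of_le h1 with h3 | h3
      · rw [← h2]; exact h3
      · exfalso
        apply hpno
        rw [AoptF, Finset.mem_filter]
        refine ⟨hpa, ?_⟩
        have hfin1 : cE r b γ p.1 * ∑ s' : S, G.trans p.1 p.2 s' * vstar G r b γ s' ≠ ∞ :=
          step_ne_top hb hγ p.1 p.2 (fun s' => vstar_le_one s')
        rw [← ENNReal.toReal_eq_toReal_iff' hfin1 (vstar_ne_top p.1)]
        rw [step_toReal_one (hcE1 p.1 (hBY _ hpB)) p.2 _ (fun s' => vstar_ne_top s')]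
        exact h3.symm
    · linarith
  have hΘle : ∀ s ∈ B, G.isMax s = true → ∀ a ∈ G.actions s, a ∉ AoptF G r b γ s →
      Θ ≤ ∑ s' : S, dR G s a s' * vR s' := by
    intro s hs hM a ha hano
    have hpmem : (s, a) ∈ prs := by
      rw [hprs, Finset.mem_filter, Finset.mem_product]
      exact ⟨⟨hs, Finset.mem_univ a⟩, hM, ha, hano⟩
    rw [hΘdef, dif_pos ⟨(s,a), hpmem⟩]
    exact Finset.inf'_le _ hpmem
  set θ₁ : ℝ := min Θ 1 with hθ₁
  have hθ₁0 : 0 ≤ θ₁ := le_min hΘ0 zero_le_one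
  have hBsum : ∀ (s : S) (a : A), (∀ s', G.trans s a s' ≠ 0 → s' ∈ B) →
      ∀ (w : S → ℝ), (∀ s' ∈ B, θ₁ ≤ w s') →
      θ₁ ≤ ∑ s' : S, dR G s a s' * w s' := by
    intro s a hsp w hw
    calc θ₁ = ∑ s' : S, dR G s a s' * θ₁ := by rw [← Finset.sum_mul, dR_sum, one_mul]
      _ ≤ ∑ s' : S, dR G s a s' * w s' := by
          refine Finset.sum_le_sum (fun s' _ => ?_)
          by_cases h : G.trans s a s' ≠ 0
          · exact mul_le_mul_of_nonneg_left (hw s' (hsp s' h)) (dR_nonneg (G := G) s a s')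
          · rw [dR_zero h, zero_mul, zero_mul]
  have hmain : ∀ k, ∀ s ∈ B, θ₁ ≤ (val G r b γ k s).toReal := by
    intro k
    induction k with
    | zero =>
      intro s hs
      have h1 : val G r b γ 0 s = 1 := rfl
      rw [h1, ENNReal.toReal_one, hθ₁]
      exact min_le_right Θ 1
    | succ k ih =>
      intro s hs
      have hsY := hBY s hs
      by_cases hM : G.isMax s = true
      · obtain ⟨a₀, ha₀, hstepeq⟩ := Finset.exists_mem_eq_inf' (G.actions_nonempty s)
          (fun a => ∑ s' : S, G.trans s a s' * val G r b γ k s')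
        have hval : val G r b γ (k+1) s =
            cE r b γ s * ∑ s' : S, G.trans s a₀ s' * val G r b γ k s' := by
          rw [val_succ, if_pos hM, hstepeq]
        have hvalR : (val G r b γ (k+1) s).toReal =
            ∑ s' : S, dR G s a₀ s' * (val G r b γ k s').toReal := by
          rw [hval, step_toReal_one (hcE1 s hsY) a₀ _ (fun s' => val_ne_top hb hγ k s')]
        rw [hvalR]
        by_cases hopt : a₀ ∈ AoptF G r b γ s
        · have hsuppY := hYmax s hsY hM a₀ hopt
          have hsuppB := hsupp s hs a₀ hsuppY
            (le_of_eq (by rw [hrealOpt s hsY a₀ hopt, hBval s hs]))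
          exact hBsum s a₀ hsuppB _ (fun s' hs' => ih s' hs')
        · have h1 : Θ ≤ ∑ s' : S, dR G s a₀ s' * vR s' := hΘle s hs hM a₀ ha₀ hopt
          have h2 : ∑ s' : S, dR G s a₀ s' * vR s'
              ≤ ∑ s' : S, dR G s a₀ s' * (val G r b γ k s').toReal := by
            refine Finset.sum_le_sum (fun s' _ => ?_)
            refine mul_le_mul_of_nonneg_left ?_ (dR_nonneg (G := G) s a₀ s')
            exact ENNReal.toReal_mono (val_ne_top hb hγ k s') (vstar_le_val k s')
          calc θ₁ ≤ Θ := min_le_left Θ 1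
            _ ≤ _ := le_trans h1 h2
      · obtain ⟨aY, haY, hsuppY⟩ := hYmin s hsY hM
        have hsuppB := hsupp s hs aY hsuppY
          (by rw [← hBval s hs]; exact hrealMin s hsY hM aY haY)
        have hmono : cE r b γ s * ∑ s' : S, G.trans s aY s' * val G r b γ k s'
            ≤ val G r b γ (k+1) s := by
          rw [val_succ, if_neg hM]
          exact mul_le_mul_right
            (Finset.le_sup' (fun a => ∑ s' : S, G.trans s a s' * val G r b γ k s') haY) _
        have h3 := ENNReal.toReal_mono (val_ne_top hb hγ (k+1) s) hmono
        rw [step_toReal_one (hcE1 s hsY) aY _ (fun s' => val_ne_top hb hγ k s')] at h3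
        exact le_trans (hBsum s aY hsuppB _ (fun s' hs' => ih s' hs')) h3
  have hβθ : θ₁ ≤ β := by
    have h1 : ∀ k, ENNReal.ofReal θ₁ ≤ val G r b γ k sβ := fun k =>
      (ENNReal.ofReal_le_iff_le_toReal (val_ne_top hb hγ k sβ)).mpr (hmain k sβ hsβB)
    have h2 : ENNReal.ofReal θ₁ ≤ vstar G r b γ sβ := le_iInf h1
    have h3 := ENNReal.toReal_mono (vstar_ne_top sβ) h2
    rw [ENNReal.toReal_ofReal hθ₁0] at h3
    calc θ₁ ≤ vR sβ := h3
      _ = β := hBval sβ hsβB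
  rcases le_or_gt Θ 1 with h | h
  · have heq : θ₁ = Θ := min_eq_left h
    rw [heq] at hβθ
    linarith
  · have heq : θ₁ = 1 := min_eq_right h.le
    rw [heq] at hβθ
    linarith


lemma step_toReal (s : S) (a : A) (w : S → ℝ≥0∞) (hw : ∀ s', w s' ≠ ∞) :
    (cE r b γ s * ∑ s' : S, G.trans s a s' * w s').toReal =
      (cE r b γ s).toReal * ∑ s' : S, dR G s a s' * (w s').toReal := by
  rw [ENNReal.toReal_mul,
    ENNReal.toReal_sum (fun s' _ => ENNReal.mul_ne_top (trans_ne_top G s a s') (hw s'))]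
  exact congrArg _ (Finset.sum_congr rfl (fun s' _ => ENNReal.toReal_mul))

/-- existence of a value-optimal, attractor-progressing Maximizer choice -/
lemma exists_good_f (hb : 1 < b) (hγ : 0 < γ) :
    ∃ f : S → A, (∀ s, f s ∈ G.actions s) ∧
      (∀ s, G.isMax s = true → f s ∈ AoptF G r b γ s) ∧
      (∀ s, G.isMax s = true → ∀ i, s ∈ attr G r b γ (i+1) → s ∉ attr G r b γ i →
        ∃ s', s' ∈ attr G r b γ i ∧ G.trans s (f s) s' ≠ 0) := by
  have hchoice : ∀ s, ∃ a, a ∈ G.actions s ∧ (G.isMax s = true → a ∈ AoptF G r b γ s ∧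
      (∀ i, s ∈ attr G r b γ (i+1) → s ∉ attr G r b γ i →
        ∃ s', s' ∈ attr G r b γ i ∧ G.trans s a s' ≠ 0)) := by
    intro s
    haveI : DecidablePred (fun i : ℕ => s ∈ attr G r b γ i) :=
      fun i => Classical.propDecidable _
    by_cases hM : G.isMax s = true
    · have hex := attr_complete (G := G) (r := r) hb hγ s
      generalize hn : Nat.find hex = n
      have hmemn : s ∈ attr G r b γ n := hn ▸ Nat.find_spec hex
      cases n with
      | zero =>
        obtain ⟨a, ha⟩ := AoptF_nonempty hb hγ s hM
        exact ⟨a, AoptF_subset s ha, fun _ => ⟨ha, fun i _ hi0 =>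
          absurd (attr_mono 0 i (Nat.zero_le i) hmemn) hi0⟩⟩
      | succ m =>
        have hnotm : s ∉ attr G r b γ m := by
          have := Nat.find_min hex (m := m) (by omega)
          exact this
        have hnew : s ∈ {s | if G.isMax s then
            ∃ a ∈ AoptF G r b γ s, ∃ s', s' ∈ attr G r b γ m ∧ G.trans s a s' ≠ 0
            else ∀ a ∈ G.actions s, ∃ s', s' ∈ attr G r b γ m ∧ G.trans s a s' ≠ 0} := by
          have := attr_succ (G := G) (r := r) (b := b) (γ := γ) m ▸ hmemn
          rcases this with h | h
          · exact absurd h hnotm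
          · exact h
        rw [Set.mem_setOf_eq, if_pos hM] at hnew
        obtain ⟨a, haopt, s', hs', hne⟩ := hnew
        refine ⟨a, AoptF_subset s haopt, fun _ => ⟨haopt, fun i hi1 hi0 => ?_⟩⟩
        have him : i = m := by
          have h1 : Nat.find hex ≤ i + 1 := Nat.find_min' hex hi1
          have h2 : ¬ (m + 1 ≤ i) := fun hle => hi0 (attr_mono (m+1) i hle hmemn)
          omega
        subst him
        exact ⟨s', hs', hne⟩
    · obtain ⟨a, ha⟩ := G.actions_nonempty s
      exact ⟨a, ha, fun h => absurd h hM⟩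
  choose f hf using hchoice
  exact ⟨f, fun s => (hf s).1, fun s hM => ((hf s).2 hM).1, fun s hM => ((hf s).2 hM).2⟩

/-- the key gap lemma: the `f`-value never exceeds the optimal value -/
lemma fvstar_le_vstar (hb : 1 < b) (hγ : 0 < γ) (f : S → A)
    (hfa : ∀ s, f s ∈ G.actions s)
    (hfopt : ∀ s, G.isMax s = true → f s ∈ AoptF G r b γ s)
    (hfprog : ∀ s, G.isMax s = true → ∀ i, s ∈ attr G r b γ (i+1) → s ∉ attr G r b γ i →
      ∃ s', s' ∈ attr G r b γ i ∧ G.trans s (f s) s' ≠ 0) :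
    ∀ s, fvstar G r b γ f s ≤ vstar G r b γ s := by
  classical
  by_contra hc
  push_neg at hc
  obtain ⟨s₁, hs₁⟩ := hc
  haveI : Nonempty S := ⟨s₁⟩
  set DD : S → ℝ := fun s => (fvstar G r b γ f s).toReal - (vstar G r b γ s).toReal with hDD
  set m : ℝ := Finset.univ.sup' Finset.univ_nonempty DD with hmdef
  have hDle : ∀ s, DD s ≤ m := fun s => Finset.le_sup' DD (Finset.mem_univ s)
  have hmpos : 0 < m := by
    have h1 : DD s₁ ≤ m := hDle s₁
    have h2 : 0 < DD s₁ := by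
      rw [hDD]
      have := (ENNReal.toReal_lt_toReal (vstar_ne_top s₁) (fvstar_ne_top f s₁)).mpr hs₁
      simp only [sub_pos]
      exact this
    linarith
  set M : Finset S := Finset.univ.filter (fun s => DD s = m) with hMdef
  have hMne : M.Nonempty := by
    obtain ⟨s, hs, hval⟩ := Finset.exists_mem_eq_sup' Finset.univ_nonempty DD
    exact ⟨s, Finset.mem_filter.mpr ⟨hs, hval.symm⟩⟩
  have hMval : ∀ s ∈ M, DD s = m := fun s hs => (Finset.mem_filter.mp hs).2
  -- the key one-step analysis at a maximal-gap state
  have hkey : ∀ sm ∈ M, ∀ a : A,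
      fvstar G r b γ f sm = cE r b γ sm * ∑ s' : S, G.trans sm a s' * fvstar G r b γ f s' →
      cE r b γ sm * ∑ s' : S, G.trans sm a s' * vstar G r b γ s' ≤ vstar G r b γ sm →
      r sm = 0 ∧ ∀ s', G.trans sm a s' ≠ 0 → s' ∈ M := by
    intro sm hsmM a hue hve
    have hcR1 : (cE r b γ sm).toReal ≤ 1 := by
      have := ENNReal.toReal_mono ENNReal.one_ne_top (cE_le_one r hb hγ sm)
      simpa using this
    have hcR0 : 0 ≤ (cE r b γ sm).toReal := ENNReal.toReal_nonneg
    have huRe : (fvstar G r b γ f sm).toReal =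
        (cE r b γ sm).toReal * ∑ s' : S, dR G sm a s' * (fvstar G r b γ f s').toReal := by
      rw [← step_toReal sm a _ (fun s' => fvstar_ne_top f s'), ← hue]
    have hvRe : (cE r b γ sm).toReal * ∑ s' : S, dR G sm a s' * (vstar G r b γ s').toReal
        ≤ (vstar G r b γ sm).toReal := by
      rw [← step_toReal sm a _ (fun s' => vstar_ne_top s')]
      exact ENNReal.toReal_mono (vstar_ne_top sm) hve
    have hsplit : ∑ s' : S, dR G sm a s' * DD s' =
        (∑ s' : S, dR G sm a s' * (fvstar G r b γ f s').toReal) -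
        (∑ s' : S, dR G sm a s' * (vstar G r b γ s').toReal) := by
      rw [← Finset.sum_sub_distrib]
      exact Finset.sum_congr rfl (fun s' _ => by rw [hDD]; ring)
    have h2 : m ≤ (cE r b γ sm).toReal * ∑ s' : S, dR G sm a s' * DD s' := by
      have := hMval sm hsmM
      rw [← this, hDD]
      simp only []
      rw [hsplit, mul_sub]
      rw [huRe]
      linarith [hvRe]
    have h3 : ∑ s' : S, dR G sm a s' * DD s' ≤ m := by
      calc ∑ s' : S, dR G sm a s' * DD s' ≤ ∑ s' : S, dR G sm a s' * m :=
            Finset.sum_le_sum (fun s' _ =>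
              mul_le_mul_of_nonneg_left (hDle s') (dR_nonneg (G := G) sm a s'))
        _ = m := by rw [← Finset.sum_mul, dR_sum, one_mul]
    have hcReq : (cE r b γ sm).toReal = 1 := by
      nlinarith [mul_le_mul_of_nonneg_left h3 hcR0]
    have hr0 : r sm = 0 := by
      by_contra hrne
      have hrpos : (0:ℝ) < (r sm : ℝ) := by
        have h0 : (0:ℝ≥0) < r sm := lt_of_le_of_ne zero_le (Ne.symm hrne)
        exact_mod_cast h0
      have hlt : (cE r b γ sm).toReal < 1 := by
        rw [cE, ENNReal.toReal_ofReal (Real.rpow_pos_of_pos (lt_trans one_pos hb) _).le]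
        refine Real.rpow_lt_one_of_one_lt_of_neg hb ?_
        nlinarith
      linarith
    refine ⟨hr0, ?_⟩
    -- support of a is within M
    rw [hcReq, one_mul] at h2
    have hterm : ∀ s' : S, 0 ≤ dR G sm a s' * (m - DD s') := fun s' =>
      mul_nonneg (dR_nonneg (G := G) sm a s') (by linarith [hDle s'])
    have hsum0 : ∑ s' : S, dR G sm a s' * (m - DD s') = 0 := by
      have he : ∑ s' : S, dR G sm a s' * (m - DD s') = m - ∑ s' : S, dR G sm a s' * DD s' := by
        rw [Finset.sum_congr rfl (fun s' _ => mul_sub (dR G sm a s') m (DD s')),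
          Finset.sum_sub_distrib, ← Finset.sum_mul, dR_sum, one_mul]
      refine le_antisymm (by rw [he]; linarith) (Finset.sum_nonneg (fun s' _ => hterm s'))
    intro s' hs'
    have heach := (Finset.sum_eq_zero_iff_of_nonneg (fun s' _ => hterm s')).mp hsum0 s'
      (Finset.mem_univ s')
    have hd := dR_pos (G := G) hs'
    have : m - DD s' = 0 := by
      rcases mul_eq_zero.mp heach with h | h
      · exact absurd h (ne_of_gt hd)
      · exact h
    exact Finset.mem_filter.mpr ⟨Finset.mem_univ s', by linarith⟩
  -- pick a maximal-gap state of minimal attractor rank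
  have hrk : ∀ s : S, ∃ i, s ∈ attr G r b γ i := attr_complete (G := G) (r := r) hb hγ
  haveI hdec : ∀ s : S, DecidablePred (fun i : ℕ => s ∈ attr G r b γ i) :=
    fun s i => Classical.propDecidable _
  obtain ⟨sm, hsmM, hsmmin⟩ := Finset.exists_min_image M (fun s : S => Nat.find (hrk s)) hMne
  -- get the relevant action at sm
  have hact : ∃ a : A, a ∈ G.actions sm ∧
      fvstar G r b γ f sm = cE r b γ sm * ∑ s' : S, G.trans sm a s' * fvstar G r b γ f s' ∧
      cE r b γ sm * ∑ s' : S, G.trans sm a s' * vstar G r b γ s' ≤ vstar G r b γ sm ∧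
      (G.isMax sm = true → a = f sm) := by
    by_cases hM : G.isMax sm = true
    · exact ⟨f sm, hfa sm, fvstar_fix_max hb hγ f sm hM,
        le_of_eq (AoptF_spec (hfopt sm hM)), fun _ => rfl⟩
    · obtain ⟨a, ha, hae⟩ := fvstar_fix_min hb hγ f sm hM
      exact ⟨a, ha, hae, step_le_vstar_min (r := r) hb hγ sm hM a ha, fun h => absurd h hM⟩
  obtain ⟨a, haact, hue, hve, hamax⟩ := hact
  obtain ⟨hr0, hsupp⟩ := hkey sm hsmM a hue hve
  -- sm is not in attr 0
  have hnot0 : sm ∉ attr G r b γ 0 := by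
    rw [attr_zero, Set.mem_setOf_eq]
    push_neg
    refine ⟨hr0, ?_⟩
    intro hv1
    have hDDsm := hMval sm hsmM
    have h1 : DD sm = (fvstar G r b γ f sm).toReal - (vstar G r b γ sm).toReal := rfl
    have h2 : (vstar G r b γ sm).toReal = 1 := by rw [hv1]; exact ENNReal.toReal_one
    have hle1 : (fvstar G r b γ f sm).toReal ≤ 1 := by
      have := ENNReal.toReal_mono ENNReal.one_ne_top (fvstar_le_one (G := G) (r := r) (b := b) (γ := γ) f sm)
      simpa using this
    rw [h1, h2] at hDDsm
    linarith
  -- rank of sm is positive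
  set n := Nat.find (hrk sm) with hn
  have hmemn : sm ∈ attr G r b γ n := Nat.find_spec (hrk sm)
  cases hcase : n with
  | zero => rw [hcase] at hmemn; exact hnot0 hmemn
  | succ i =>
    rw [hcase] at hmemn
    have hnoti : sm ∉ attr G r b γ i := by
      have := Nat.find_min (hrk sm) (m := i) (by omega)
      exact this
    -- find a successor in attr i with positive probability
    have hstep : ∃ s', s' ∈ attr G r b γ i ∧ G.trans sm a s' ≠ 0 := by
      by_cases hM : G.isMax sm = true
      · rw [hamax hM]
        exact hfprog sm hM i hmemn hnoti
      · have hnew : sm ∈ {s | if G.isMax s then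
            ∃ a ∈ AoptF G r b γ s, ∃ s', s' ∈ attr G r b γ i ∧ G.trans s a s' ≠ 0
            else ∀ a ∈ G.actions s, ∃ s', s' ∈ attr G r b γ i ∧ G.trans s a s' ≠ 0} := by
          have h2 := attr_succ (G := G) (r := r) (b := b) (γ := γ) i ▸ hmemn
          rcases h2 with h | h
          · exact absurd h hnoti
          · exact h
        rw [Set.mem_setOf_eq, if_neg hM] at hnew
        exact hnew a haact
    obtain ⟨s', hs'i, hs'ne⟩ := hstep
    have hs'M : s' ∈ M := hsupp s' hs'ne
    have : Nat.find (hrk s') ≤ i := Nat.find_min' (hrk s') hs'i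
    have hge := hsmmin s' hs'M
    omega


lemma erisk_anti (hb : 1 < b) (hγ : 0 < γ) {x y : ℝ≥0∞} (hxy : x ≤ y) (hy : y ≠ ⊤) :
    erisk b γ y ≤ erisk b γ x := by
  rw [erisk, erisk]
  by_cases hx : x = 0
  · rw [if_pos hx]; exact le_top
  · have hy0 : y ≠ 0 := fun h => hx (le_antisymm (h ▸ hxy) zero_le)
    rw [if_neg hx, if_neg hy0]
    refine ENNReal.ofReal_le_ofReal ?_
    have hxpos : 0 < x.toReal := ENNReal.toReal_pos hx (ne_top_of_le_ne_top hy hxy)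
    have hle : x.toReal ≤ y.toReal := ENNReal.toReal_mono hy hxy
    have hlog : Real.logb b x.toReal ≤ Real.logb b y.toReal :=
      Real.logb_le_logb_of_le hb hxpos hle
    have hpos : 0 < 1 / γ := by positivity
    nlinarith

end EntRisk

open EntRisk

/-- Memoryless deterministic strategies suffice to optimize the
entropic risk: there is an MD Maximizer strategy achieving `ERisk*(s)` against all
Minimizer strategies at every state, and symmetrically for the Minimizer. -/
theorem MD_strategies_suffice [DecidableEq A] (G : SG S A) (r : S → ℝ≥0) (b γ : ℝ)
    (hb : 1 < b) (hγ : 0 < γ) :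
    (∃ (f : S → A) (hf : ∀ s, f s ∈ G.actions s), ∀ s : S,
        ERiskStar G r b γ s =
          ⨅ τ : Strategy G, ERiskVal G (Strategy.ofMD G f hf) τ r b γ s) ∧
    (∃ (g : S → A) (hg : ∀ s, g s ∈ G.actions s), ∀ s : S,
        ERiskStar G r b γ s =
          ⨆ σ : Strategy G, ERiskVal G σ (Strategy.ofMD G g hg) r b γ s) := by
  obtain ⟨f, hfa, hfopt, hfprog⟩ := exists_good_f (G := G) (r := r) hb hγ
  have hgex : ∀ s, ∃ a, a ∈ G.actions s ∧ (¬(G.isMax s = true) →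
      vstar G r b γ s ≤ cE r b γ s * ∑ s' : S, G.trans s a s' * vstar G r b γ s') := by
    intro s
    by_cases hM : G.isMax s = true
    · obtain ⟨a, ha⟩ := G.actions_nonempty s
      exact ⟨a, ha, fun h => absurd hM h⟩
    · obtain ⟨a, ha, hle⟩ := exists_min_opt (G := G) (r := r) hb hγ s hM
      exact ⟨a, ha, fun _ => hle⟩
  choose g hga hgopt using hgex
  set σf := Strategy.ofMD G f hfa with hσf
  set τg := Strategy.ofMD G g hga with hτg
  have hUle : ∀ (τ : Strategy G) (s : S),
      utility G σf τ r b γ s ≤ vstar G r b γ s := by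
    intro τ s
    refine le_trans ?_ (fvstar_le_vstar hb hγ f hfa hfopt hfprog s)
    refine le_iInf (fun n => ?_)
    refine le_trans (iInf_le _ n) ?_
    exact le_trans (max_side hb hγ f n σf τ (isMDAt_ofMD f hfa) s)
      (fval_antitone hb hγ f n s)
  have hUge : ∀ (σ : Strategy G) (s : S),
      vstar G r b γ s ≤ utility G σ τg r b γ s := by
    intro σ s
    exact le_iInf (fun n => min_side hb hγ g hgopt n σ τg (isMDAt_ofMD g hga) s)
  have hUfin : ∀ (σ τ : Strategy G) (s : S), utility G σ τ r b γ s ≠ ⊤ := by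
    intro σ τ s
    refine ne_top_of_le_ne_top ENNReal.one_ne_top ?_
    refine le_trans (iInf_le _ 0) ?_
    rw [utilityN_zero]
    exact cE_le_one r hb hγ s
  have hvfin : ∀ s : S, vstar G r b γ s ≠ ⊤ := fun s => vstar_ne_top s
  -- erisk-level inequalities
  have hE1 : ∀ s, ERiskStar G r b γ s ≤ erisk b γ (vstar G r b γ s) := by
    intro s
    refine iSup_le (fun σ => ?_)
    refine le_trans (iInf_le _ τg) ?_
    exact erisk_anti hb hγ (hUge σ s) (hUfin σ τg s)
  have hE2 : ∀ s, erisk b γ (vstar G r b γ s) ≤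
      ⨅ τ : Strategy G, ERiskVal G σf τ r b γ s := by
    intro s
    refine le_iInf (fun τ => ?_)
    exact erisk_anti hb hγ (hUle τ s) (hvfin s)
  have hE3 : ∀ s, (⨅ τ : Strategy G, ERiskVal G σf τ r b γ s) ≤ ERiskStar G r b γ s :=
    fun s => le_iSup (fun σ => ⨅ τ : Strategy G, ERiskVal G σ τ r b γ s) σf
  have hstar : ∀ s, ERiskStar G r b γ s = erisk b γ (vstar G r b γ s) :=
    fun s => le_antisymm (hE1 s) (le_trans (hE2 s) (hE3 s))
  constructor
  · exact ⟨f, hfa, fun s => le_antisymm (le_trans (hE1 s) (hE2 s)) (hE3 s)⟩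
  · refine ⟨g, hga, fun s => ?_⟩
    rw [hstar s]
    refine le_antisymm ?_ ?_
    · have heq : utility G σf τg r b γ s = vstar G r b γ s :=
        le_antisymm (hUle τg s) (hUge σf s)
      refine le_trans (le_of_eq ?_) (le_iSup (fun σ => ERiskVal G σ τg r b γ s) σf)
      rw [ERiskVal, heq]
    · refine iSup_le (fun σ => ?_)
      exact erisk_anti hb hγ (hUge σ s) (hUfin σ τg s)
end

section
/- Uniqueness of the fixed point under the stopping condition: let G be a turn-based stochastic game with reward function r : S → [0,∞), basis b > 1, and factor γ > 0, and suppose that for every strategy profile π = (σ,τ) and every state s, P^π_{G,s}[◇(S₀ ∪ {s' ∈ S : r(s') > 0})] > 0, i.e., with positive probability the play reaches S₀ or a state with positive reward. Then the system of equations v(s) = 0 for s ∈ S∞, v(s) = 1 for s ∈ S₀, and, for every other state s, v(s) = b^{−γ·r(s)}·min_{a ∈ A(s)} Σ_{s'} δ(s,a,s')·v(s') if s ∈ S_max and v(s) = b^{−γ·r(s)}·max_{a ∈ A(s)} Σ_{s'} δ(s,a,s')·v(s') if s ∈ S_min, has a unique solution v : S → ℝ. -/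
open scoped ENNReal NNReal

variable {S A : Type*} [Fintype S] [Fintype A]

section UFPAux

variable (G : SG S A) (r : S → ℝ≥0) (b γ : ℝ)

lemma UFP_trans_ne_top (s : S) (a : A) (s' : S) : G.trans s a s' ≠ ⊤ := by
  intro h
  have h1 := G.trans_sum s a
  have h2 : G.trans s a s' ≤ ∑ s'' : S, G.trans s a s'' :=
    Finset.single_le_sum (fun _ _ => zero_le) (Finset.mem_univ s')
  rw [h1, h] at h2
  exact (ENNReal.one_lt_top).not_ge h2

lemma UFP_sum_toReal (s : S) (a : A) : ∑ s' : S, (G.trans s a s').toReal = 1 := by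
  rw [← ENNReal.toReal_sum (fun s' _ => UFP_trans_ne_top G s a s'), G.trans_sum]
  simp

open Classical in
/-- The Bellman operator for the fixed-point system. -/
noncomputable def UFPop (v : S → ℝ) (s : S) : ℝ :=
  if s ∈ Sinf G r then 0
  else if s ∈ S0 G r then 1
  else b ^ (-(γ * (r s : ℝ))) *
    (if G.isMax s then
      (G.actions s).inf' (G.actions_nonempty s) fun a => ∑ s' : S, (G.trans s a s').toReal * v s'
    else
      (G.actions s).sup' (G.actions_nonempty s) fun a => ∑ s' : S, (G.trans s a s').toReal * v s')

open Classical in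
/-- One-step worst-case discount operator. -/
noncomputable def UFPstep (g : S → ℝ) (s : S) : ℝ :=
  if s ∈ S0 G r ∪ Sinf G r then 0
  else b ^ (-(γ * (r s : ℝ))) *
    (G.actions s).sup' (G.actions_nonempty s) fun a => ∑ s' : S, (G.trans s a s').toReal * g s'

/-- Iterated worst-case discount coefficients. -/
noncomputable def UFPc : ℕ → S → ℝ
  | 0 => fun _ => 1
  | n + 1 => UFPstep G r b γ (UFPc n)

lemma abs_inf'_sub_inf'_le (t : Finset A) (ht : t.Nonempty) (f g : A → ℝ) :
    |t.inf' ht f - t.inf' ht g| ≤ t.sup' ht fun a => |f a - g a| := by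
  rw [abs_sub_le_iff]
  constructor
  · obtain ⟨a, ha, hg⟩ := t.exists_mem_eq_inf' ht g
    rw [hg]
    calc t.inf' ht f - g a ≤ f a - g a := by
          have := Finset.inf'_le f ha; linarith
      _ ≤ |f a - g a| := le_abs_self _
      _ ≤ _ := Finset.le_sup' (fun a => |f a - g a|) ha
  · obtain ⟨a, ha, hf⟩ := t.exists_mem_eq_inf' ht f
    rw [hf]
    calc t.inf' ht g - f a ≤ g a - f a := by
          have := Finset.inf'_le g ha; linarith
      _ ≤ |f a - g a| := by rw [abs_sub_comm]; exact le_abs_self _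
      _ ≤ _ := Finset.le_sup' (fun a => |f a - g a|) ha

lemma abs_sup'_sub_sup'_le (t : Finset A) (ht : t.Nonempty) (f g : A → ℝ) :
    |t.sup' ht f - t.sup' ht g| ≤ t.sup' ht fun a => |f a - g a| := by
  rw [abs_sub_le_iff]
  constructor
  · obtain ⟨a, ha, hf⟩ := t.exists_mem_eq_sup' ht f
    rw [hf]
    calc f a - t.sup' ht g ≤ f a - g a := by
          have := Finset.le_sup' g ha; linarith
      _ ≤ |f a - g a| := le_abs_self _
      _ ≤ _ := Finset.le_sup' (fun a => |f a - g a|) ha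
  · obtain ⟨a, ha, hg⟩ := t.exists_mem_eq_sup' ht g
    rw [hg]
    calc g a - t.sup' ht f ≤ g a - f a := by
          have := Finset.le_sup' f ha; linarith
      _ ≤ |f a - g a| := by rw [abs_sub_comm]; exact le_abs_self _
      _ ≤ _ := Finset.le_sup' (fun a => |f a - g a|) ha

variable {G r b γ}

lemma UFP_rpow_pos (hb : 1 < b) (x : ℝ) : 0 < b ^ x :=
  Real.rpow_pos_of_pos (lt_trans one_pos hb) x

lemma UFP_rpow_le_one (hb : 1 < b) (hγ : 0 < γ) (s : S) : b ^ (-(γ * (r s : ℝ))) ≤ 1 :=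
  Real.rpow_le_one_of_one_le_of_nonpos hb.le
    (neg_nonpos.mpr (mul_nonneg hγ.le (r s).coe_nonneg))

/-- One-step Lipschitz-type estimate for the Bellman operator. -/
lemma UFPop_abs_sub_le (hb : 1 < b) (v w g : S → ℝ)
    (hg : ∀ s, |v s - w s| ≤ g s) (s : S) :
    |UFPop G r b γ v s - UFPop G r b γ w s| ≤ UFPstep G r b γ g s := by
  classical
  unfold UFPop UFPstep
  by_cases h1 : s ∈ Sinf G r
  · simp [h1, Set.mem_union]
  by_cases h2 : s ∈ S0 G r
  · simp [h1, h2, Set.mem_union]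
  have hmem : s ∉ S0 G r ∪ Sinf G r := by
    simp [Set.mem_union, h1, h2]
  rw [if_neg h1, if_neg h1, if_neg h2, if_neg h2, if_neg hmem]
  rw [← mul_sub, abs_mul, abs_of_pos (UFP_rpow_pos hb _)]
  refine mul_le_mul_of_nonneg_left ?_ (UFP_rpow_pos hb _).le
  have key : ∀ a ∈ G.actions s,
      |(∑ s' : S, (G.trans s a s').toReal * v s') - ∑ s' : S, (G.trans s a s').toReal * w s'| ≤
        ∑ s' : S, (G.trans s a s').toReal * g s' := by
    intro a _
    rw [← Finset.sum_sub_distrib]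
    calc |∑ s' : S, ((G.trans s a s').toReal * v s' - (G.trans s a s').toReal * w s')|
        ≤ ∑ s' : S, |(G.trans s a s').toReal * v s' - (G.trans s a s').toReal * w s'| :=
          Finset.abs_sum_le_sum_abs _ _
      _ ≤ ∑ s' : S, (G.trans s a s').toReal * g s' := by
          refine Finset.sum_le_sum fun s' _ => ?_
          rw [← mul_sub, abs_mul, abs_of_nonneg ENNReal.toReal_nonneg]
          exact mul_le_mul_of_nonneg_left (hg s') ENNReal.toReal_nonneg
  by_cases hm : G.isMax s
  · rw [if_pos hm, if_pos hm]
    refine le_trans (abs_inf'_sub_inf'_le _ _ _ _) ?_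
    exact Finset.sup'_mono_fun key
  · rw [if_neg hm, if_neg hm]
    refine le_trans (abs_sup'_sub_sup'_le _ _ _ _) ?_
    exact Finset.sup'_mono_fun key

lemma UFPc_nonneg (hb : 1 < b) : ∀ n s, 0 ≤ UFPc G r b γ n s := by
  intro n
  induction n with
  | zero => intro s; simp [UFPc]
  | succ n ih =>
    intro s
    unfold UFPc UFPstep
    split_ifs with h
    · exact le_rfl
    · refine mul_nonneg (UFP_rpow_pos hb _).le ?_
      obtain ⟨a, ha⟩ := G.actions_nonempty s
      refine le_trans ?_ (Finset.le_sup' _ ha)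
      exact Finset.sum_nonneg fun s' _ => mul_nonneg ENNReal.toReal_nonneg (ih s')

lemma UFPc_le_one (hb : 1 < b) (hγ : 0 < γ) : ∀ n s, UFPc G r b γ n s ≤ 1 := by
  intro n
  induction n with
  | zero => intro s; simp [UFPc]
  | succ n ih =>
    intro s
    unfold UFPc UFPstep
    split_ifs with h
    · norm_num
    · have hsup : ((G.actions s).sup' (G.actions_nonempty s)
          fun a => ∑ s' : S, (G.trans s a s').toReal * UFPc G r b γ n s') ≤ 1 := by
        refine Finset.sup'_le _ _ fun a _ => ?_
        calc ∑ s' : S, (G.trans s a s').toReal * UFPc G r b γ n s'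
            ≤ ∑ s' : S, (G.trans s a s').toReal := by
              refine Finset.sum_le_sum fun s' _ => ?_
              exact mul_le_of_le_one_right ENNReal.toReal_nonneg (ih s')
          _ = 1 := UFP_sum_toReal G s a
      calc b ^ (-(γ * (r s : ℝ))) * _ ≤ 1 * 1 :=
            mul_le_mul (UFP_rpow_le_one hb hγ s) hsup
              (by
                obtain ⟨a, ha⟩ := G.actions_nonempty s
                refine le_trans ?_ (Finset.le_sup' _ ha)
                exact Finset.sum_nonneg fun s' _ =>
                  mul_nonneg ENNReal.toReal_nonneg (UFPc_nonneg hb n s')) zero_le_one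
        _ = 1 := by norm_num

lemma UFPc_antitone (hb : 1 < b) (hγ : 0 < γ) :
    ∀ n s, UFPc G r b γ (n + 1) s ≤ UFPc G r b γ n s := by
  intro n
  induction n with
  | zero => intro s; exact (UFPc_le_one hb hγ 1 s)
  | succ n ih =>
    intro s
    show UFPstep G r b γ (UFPc G r b γ (n + 1)) s ≤ UFPstep G r b γ (UFPc G r b γ n) s
    unfold UFPstep
    split_ifs with h
    · exact le_rfl
    · refine mul_le_mul_of_nonneg_left ?_ (UFP_rpow_pos hb _).le
      refine Finset.sup'_mono_fun fun a _ => ?_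
      exact Finset.sum_le_sum fun s' _ =>
        mul_le_mul_of_nonneg_left (ih s') ENNReal.toReal_nonneg

lemma UFP_sup'_sum_nonneg {g : S → ℝ} (hg : ∀ s, 0 ≤ g s) (s : S) :
    0 ≤ (G.actions s).sup' (G.actions_nonempty s)
      fun a => ∑ s' : S, (G.trans s a s').toReal * g s' := by
  obtain ⟨a, ha⟩ := G.actions_nonempty s
  refine le_trans ?_ (Finset.le_sup'
    (fun a => ∑ s' : S, (G.trans s a s').toReal * g s') ha)
  exact Finset.sum_nonneg fun s' _ => mul_nonneg ENNReal.toReal_nonneg (hg s')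

lemma UFP_sup'_sum_le_one {g : S → ℝ} (hg : ∀ s, g s ≤ 1) (s : S) :
    ((G.actions s).sup' (G.actions_nonempty s)
      fun a => ∑ s' : S, (G.trans s a s').toReal * g s') ≤ 1 := by
  refine Finset.sup'_le _ _ fun a _ => ?_
  calc ∑ s' : S, (G.trans s a s').toReal * g s'
      ≤ ∑ s' : S, (G.trans s a s').toReal :=
        Finset.sum_le_sum fun s' _ =>
          mul_le_of_le_one_right ENNReal.toReal_nonneg (hg s')
    _ = 1 := UFP_sum_toReal G s a

/-- Key iterate estimate: the `n`-th iterate of the Bellman operator contracts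
distances by the coefficient `UFPc n`. -/
lemma UFPc_key (hb : 1 < b) :
    ∀ n (v w : S → ℝ) (s : S),
      |(UFPop G r b γ)^[n] v s - (UFPop G r b γ)^[n] w s| ≤
        UFPc G r b γ n s * dist v w := by
  intro n
  induction n with
  | zero =>
    intro v w s
    simpa [UFPc, Real.dist_eq] using dist_le_pi_dist v w s
  | succ n ih =>
    intro v w s
    rw [Function.iterate_succ_apply', Function.iterate_succ_apply']
    have step := UFPop_abs_sub_le (G := G) (r := r) (b := b) (γ := γ) hb ((UFPop G r b γ)^[n] v) ((UFPop G r b γ)^[n] w)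
      (fun s' => UFPc G r b γ n s' * dist v w) (fun s' => ih v w s') s
    refine le_trans step (le_of_eq ?_)
    show UFPstep G r b γ _ s = UFPstep G r b γ (UFPc G r b γ n) s * dist v w
    unfold UFPstep
    split_ifs with h
    · rw [zero_mul]
    · have h1 : ∀ a : A, (∑ s' : S, (G.trans s a s').toReal * (UFPc G r b γ n s' * dist v w))
          = (∑ s' : S, (G.trans s a s').toReal * UFPc G r b γ n s') * dist v w := by
        intro a
        rw [Finset.sum_mul]
        exact Finset.sum_congr rfl fun s' _ => (mul_assoc _ _ _).symm
      simp_rw [h1]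
      have h2 : ((G.actions s).sup' (G.actions_nonempty s)
            fun a => (∑ s' : S, (G.trans s a s').toReal * UFPc G r b γ n s') * dist v w)
          = ((G.actions s).sup' (G.actions_nonempty s)
            fun a => ∑ s' : S, (G.trans s a s').toReal * UFPc G r b γ n s') * dist v w := by
        refine (Finset.comp_sup'_eq_sup'_comp _ (fun x : ℝ => x * dist v w) ?_).symm
        intro x y
        exact max_mul_of_nonneg x y dist_nonneg
      rw [h2, mul_assoc]

/-- Characterization of the states where the discount coefficient stays `1`. -/
lemma UFPc_succ_eq_one_iff (hb : 1 < b) (hγ : 0 < γ) (n : ℕ) (s : S) :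
    UFPc G r b γ (n + 1) s = 1 ↔
      s ∉ S0 G r ∧ s ∉ Sinf G r ∧ r s = 0 ∧
        ∃ a ∈ G.actions s, ∀ s', G.trans s a s' ≠ 0 → UFPc G r b γ n s' = 1 := by
  classical
  show UFPstep G r b γ (UFPc G r b γ n) s = 1 ↔ _
  unfold UFPstep
  split_ifs with hm
  · constructor
    · intro h; exact absurd h (by norm_num)
    · rintro ⟨h0, hi, -⟩
      rcases hm with h | h
      · exact absurd h h0
      · exact absurd h hi
  · have hm' : s ∉ S0 G r ∧ s ∉ Sinf G r := by
      constructor <;> intro h <;> exact hm (by simp [Set.mem_union, h])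
    constructor
    · intro h
      have hbe : b ^ (-(γ * (r s : ℝ))) ≤ 1 := UFP_rpow_le_one hb hγ s
      have hbpos : 0 < b ^ (-(γ * (r s : ℝ))) := UFP_rpow_pos hb _
      have hsle : ((G.actions s).sup' (G.actions_nonempty s)
          fun a => ∑ s' : S, (G.trans s a s').toReal * UFPc G r b γ n s') ≤ 1 :=
        UFP_sup'_sum_le_one (UFPc_le_one hb hγ n) s
      have h1b : (1 : ℝ) ≤ b ^ (-(γ * (r s : ℝ))) := by nlinarith
      have hbe1 : b ^ (-(γ * (r s : ℝ))) = 1 := le_antisymm hbe h1b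
      rw [hbe1, one_mul] at h
      have hr : r s = 0 := by
        by_contra hr
        have hrpos : 0 < (r s : ℝ) := NNReal.coe_pos.mpr (pos_iff_ne_zero.mpr hr)
        have : b ^ (-(γ * (r s : ℝ))) < 1 :=
          Real.rpow_lt_one_of_one_lt_of_neg hb (by nlinarith)
        rw [hbe1] at this
        exact lt_irrefl _ this
      obtain ⟨a, ha, hae⟩ := Finset.exists_mem_eq_sup' (G.actions_nonempty s)
        (fun a => ∑ s' : S, (G.trans s a s').toReal * UFPc G r b γ n s')
      refine ⟨hm'.1, hm'.2, hr, a, ha, ?_⟩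
      have hsum : ∑ s' : S, (G.trans s a s').toReal * UFPc G r b γ n s' = 1 := by
        rw [← hae, h]
      have hzero : ∑ s' : S, ((G.trans s a s').toReal
          - (G.trans s a s').toReal * UFPc G r b γ n s') = 0 := by
        rw [Finset.sum_sub_distrib, hsum, UFP_sum_toReal G s a, sub_self]
      have hterm : ∀ s' ∈ (Finset.univ : Finset S),
          (G.trans s a s').toReal - (G.trans s a s').toReal * UFPc G r b γ n s' = 0 := by
        refine (Finset.sum_eq_zero_iff_of_nonneg
          (s := (Finset.univ : Finset S))
          (f := fun s' => (G.trans s a s').toReal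
            - (G.trans s a s').toReal * UFPc G r b γ n s') ?_).1 hzero
        intro s' _
        have h1 := UFPc_le_one (G := G) (r := r) (b := b) (γ := γ) hb hγ n s'
        have h2 : (0:ℝ) ≤ (G.trans s a s').toReal := ENNReal.toReal_nonneg
        nlinarith
      intro s' hs'
      have hδ : (G.trans s a s').toReal ≠ 0 :=
        ENNReal.toReal_ne_zero.mpr ⟨hs', UFP_trans_ne_top G s a s'⟩
      have ht := hterm s' (Finset.mem_univ s')
      have : (G.trans s a s').toReal * UFPc G r b γ n s'
          = (G.trans s a s').toReal * 1 := by rw [mul_one]; linarith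
      exact mul_left_cancel₀ hδ this
    · rintro ⟨h0, hi, hr, a, ha, hsupp⟩
      have he : (r s : ℝ) = 0 := by rw [hr]; simp
      rw [he, mul_zero, neg_zero, Real.rpow_zero, one_mul]
      refine le_antisymm (UFP_sup'_sum_le_one (UFPc_le_one hb hγ n) s) ?_
      have hsum : ∑ s' : S, (G.trans s a s').toReal * UFPc G r b γ n s' = 1 := by
        rw [← UFP_sum_toReal G s a]
        refine Finset.sum_congr rfl fun s' _ => ?_
        by_cases hz : G.trans s a s' = 0
        · simp [hz]
        · rw [hsupp s' hz, mul_one]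
      exact hsum ▸ Finset.le_sup'
        (fun a => ∑ s' : S, (G.trans s a s').toReal * UFPc G r b γ n s') ha

/-- The decreasing sequence of "still undiscounted" state sets stabilizes. -/
lemma UFP_plateau (hb : 1 < b) (hγ : 0 < γ) :
    ∃ n, ∀ s, UFPc G r b γ (n + 1) s = 1 ↔ UFPc G r b γ n s = 1 := by
  classical
  by_contra hcon
  push_neg at hcon
  have hstep : ∀ n, ∃ s, UFPc G r b γ n s = 1 ∧ UFPc G r b γ (n + 1) s ≠ 1 := by
    intro n
    obtain ⟨s, hs⟩ := hcon n
    have himp : UFPc G r b γ (n + 1) s = 1 → UFPc G r b γ n s = 1 := fun h =>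
      le_antisymm (UFPc_le_one hb hγ n s) (h ▸ UFPc_antitone hb hγ n s)
    exact ⟨s, by tauto⟩
  set Zf : ℕ → Finset S := fun n => Finset.univ.filter fun s => UFPc G r b γ n s = 1
    with hZf
  have hsubset : ∀ n, Zf (n + 1) ⊆ Zf n := by
    intro n t ht
    simp only [hZf, Finset.mem_filter, Finset.mem_univ, true_and] at ht ⊢
    exact le_antisymm (UFPc_le_one hb hγ n t) (ht ▸ UFPc_antitone hb hγ n t)
  have hsub : ∀ n, Zf (n + 1) ⊂ Zf n := by
    intro n
    obtain ⟨s, hs1, hs2⟩ := hstep n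
    refine (Finset.ssubset_iff_of_subset (hsubset n)).2 ⟨s, ?_, ?_⟩
    · simp [hZf, hs1]
    · simp [hZf, hs2]
  have hcard : ∀ n, (Zf n).card + n ≤ (Zf 0).card := by
    intro n
    induction n with
    | zero => simp
    | succ n ih =>
      have := Finset.card_lt_card (hsub n)
      omega
  have := hcard ((Zf 0).card + 1)
  omega

/-- If the plateau set is nonempty, the stopping condition is violated. -/
lemma UFP_no_plateau_state (hb : 1 < b) (hγ : 0 < γ)
    (hstop : ∀ (σ τ : Strategy G) (s : S),
      0 < reachProb G σ τ (S0 G r ∪ {s' : S | 0 < r s'}) s)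
    (n : ℕ) (hplat : ∀ s, UFPc G r b γ (n + 1) s = 1 ↔ UFPc G r b γ n s = 1)
    (s₀ : S) (h1 : UFPc G r b γ n s₀ = 1) : False := by
  classical
  have hP : ∀ s, UFPc G r b γ n s = 1 →
      s ∉ S0 G r ∧ r s = 0 ∧
        ∃ a ∈ G.actions s, ∀ s', G.trans s a s' ≠ 0 → UFPc G r b γ n s' = 1 := by
    intro s hs
    have := (UFPc_succ_eq_one_iff hb hγ n s).1 ((hplat s).2 hs)
    exact ⟨this.1, this.2.2.1, this.2.2.2⟩
  -- choose a staying action for plateau states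
  have hex : ∀ s, ∃ a, a ∈ G.actions s ∧
      (UFPc G r b γ n s = 1 → ∀ s', G.trans s a s' ≠ 0 → UFPc G r b γ n s' = 1) := by
    intro s
    by_cases hs : UFPc G r b γ n s = 1
    · obtain ⟨a, ha, hsupp⟩ := (hP s hs).2.2
      exact ⟨a, ha, fun _ => hsupp⟩
    · obtain ⟨a, ha⟩ := G.actions_nonempty s
      exact ⟨a, ha, fun h => absurd h hs⟩
  choose f hf hsupp using hex
  letI : DecidableEq A := Classical.decEq A
  set σ : Strategy G := Strategy.ofMD G f hf with hσ
  have hact : ∀ h s a, σ.act h s a ≠ 0 → a = f s := by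
    intro h s a hz
    by_contra hne
    exact hz (by simp [hσ, Strategy.ofMD, hne])
  have hrun : ∀ (w : List (A × S)) (h : List (S × A)) (s : S),
      UFPc G r b γ n s = 1 → runProb G σ σ h s w ≠ 0 →
        ∀ p ∈ w, UFPc G r b γ n p.2 = 1 := by
    intro w
    induction w with
    | nil => intro h s hs hz p hp; simp at hp
    | cons q w ih =>
      intro h s hs hz p hp
      obtain ⟨a, s'⟩ := q
      rw [runProb, ite_self] at hz
      rw [mul_ne_zero_iff, mul_ne_zero_iff] at hz
      obtain ⟨⟨hz1, hz2⟩, hz3⟩ := hz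
      have ha : a = f s := hact h s a hz1
      have hs' : UFPc G r b γ n s' = 1 := hsupp s hs s' (ha ▸ hz2)
      rcases List.mem_cons.mp hp with rfl | hp'
      · exact hs'
      · exact ih (h ++ [(s, a)]) s' hs' hz3 p hp'
  have hT : ∀ s, UFPc G r b γ n s = 1 → s ∉ S0 G r ∪ {s' : S | 0 < r s'} := by
    intro s hs hmem
    rcases hmem with h0 | hr
    · exact (hP s hs).1 h0
    · rw [Set.mem_setOf_eq, (hP s hs).2.1] at hr
      exact lt_irrefl 0 hr
  have hreachN : ∀ m, reachProbN G σ σ (S0 G r ∪ {s' : S | 0 < r s'}) s₀ m = 0 := by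
    intro m
    unfold reachProbN
    refine Finset.sum_eq_zero fun w _ => ?_
    by_cases hw : w ∈ {w : Fin m → A × S |
        s₀ ∈ S0 G r ∪ {s' : S | 0 < r s'} ∨ ∃ i, (w i).2 ∈ S0 G r ∪ {s' : S | 0 < r s'}}
    · rw [Set.indicator_of_mem hw]
      by_contra hz
      rcases hw with h0 | ⟨i, hi⟩
      · exact hT s₀ h1 h0
      · have hmem : w i ∈ List.ofFn w := List.mem_ofFn.2 ⟨i, rfl⟩
        exact hT _ (hrun (List.ofFn w) [] s₀ h1 hz (w i) hmem) hi
    · rw [Set.indicator_of_notMem hw]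
  have hzero : reachProb G σ σ (S0 G r ∪ {s' : S | 0 < r s'}) s₀ = 0 := by
    unfold reachProb
    simp [hreachN]
  have := hstop σ σ s₀
  rw [hzero] at this
  exact lt_irrefl 0 this

/-- `Sinf` is disjoint from `S0`. -/
lemma UFP_Sinf_disjoint (s : S) (hi : s ∈ Sinf G r) : s ∉ S0 G r := by
  intro h0
  rw [Sinf, Set.mem_setOf_eq] at hi
  rw [S0, Set.mem_setOf_eq] at h0
  have hle : (⨆ σ : Strategy G, ⨅ τ : Strategy G, probInfReward G σ τ r s)
      ≤ ⨆ σ : Strategy G, ⨅ τ : Strategy G, probPosReward G σ τ r s := by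
    refine iSup_mono fun σ => iInf_mono fun τ => ?_
    unfold probInfReward probPosReward
    simpa using iInf_le (fun K : ℕ => ⨆ n : ℕ, exceedProbN G σ τ r (K : ℝ) s n) 0
  rw [hi, h0] at hle
  simp at hle

end UFPAux

/-- Uniqueness of the fixed point under the stopping condition: if
under every strategy profile and from every state the play reaches `S₀` or a state
with positive reward with positive probability, then the fixed-point system has a
unique solution `v : S → ℝ`. -/
theorem unique_fixed_point_of_stopping (G : SG S A) (r : S → ℝ≥0) (b γ : ℝ)
    (hb : 1 < b) (hγ : 0 < γ)
    (hstop : ∀ (σ τ : Strategy G) (s : S),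
      0 < reachProb G σ τ (S0 G r ∪ {s' : S | 0 < r s'}) s) :
    ∃! v : S → ℝ,
      (∀ s ∈ Sinf G r, v s = 0) ∧
      (∀ s ∈ S0 G r, v s = 1) ∧
      ∀ s, s ∉ S0 G r → s ∉ Sinf G r →
        (G.isMax s →
          v s = b ^ (-(γ * (r s : ℝ))) *
            (G.actions s).inf' (G.actions_nonempty s)
              (fun a => ∑ s' : S, (G.trans s a s').toReal * v s')) ∧
        (¬ G.isMax s →
          v s = b ^ (-(γ * (r s : ℝ))) *
            (G.actions s).sup' (G.actions_nonempty s)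
              (fun a => ∑ s' : S, (G.trans s a s').toReal * v s')) := by
  classical
  have hiff : ∀ v : S → ℝ,
      ((∀ s ∈ Sinf G r, v s = 0) ∧ (∀ s ∈ S0 G r, v s = 1) ∧
        ∀ s, s ∉ S0 G r → s ∉ Sinf G r →
          (G.isMax s →
            v s = b ^ (-(γ * (r s : ℝ))) *
              (G.actions s).inf' (G.actions_nonempty s)
                (fun a => ∑ s' : S, (G.trans s a s').toReal * v s')) ∧
          (¬ G.isMax s →
            v s = b ^ (-(γ * (r s : ℝ))) *
              (G.actions s).sup' (G.actions_nonempty s)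
                (fun a => ∑ s' : S, (G.trans s a s').toReal * v s')))
        ↔ UFPop G r b γ v = v := by
    intro v
    constructor
    · rintro ⟨hv0, hv1, hv⟩
      funext s
      unfold UFPop
      split_ifs with h1 h2 h3
      · exact (hv0 s h1).symm
      · exact (hv1 s h2).symm
      · exact ((hv s h2 h1).1 h3).symm
      · exact ((hv s h2 h1).2 h3).symm
    · intro hv
      have hv' : ∀ s, v s = UFPop G r b γ v s := fun s => (congrFun hv s).symm
      refine ⟨fun s hs => ?_, fun s hs => ?_,
        fun s h0 hi => ⟨fun hm => ?_, fun hm => ?_⟩⟩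
      · rw [hv' s]; unfold UFPop; rw [if_pos hs]
      · rw [hv' s]; unfold UFPop
        rw [if_neg (fun hi => UFP_Sinf_disjoint s hi hs), if_pos hs]
      · rw [hv' s]; unfold UFPop; rw [if_neg hi, if_neg h0, if_pos hm]
      · rw [hv' s]; unfold UFPop; rw [if_neg hi, if_neg h0, if_neg hm]
  suffices hfp : ∃! v : S → ℝ, UFPop G r b γ v = v by
    obtain ⟨x, hx, hux⟩ := hfp
    exact ⟨x, (hiff x).2 hx, fun y hy => hux y ((hiff y).1 hy)⟩
  rcases isEmpty_or_nonempty S with hS | hS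
  · exact ⟨fun _ => 0, funext fun s => isEmptyElim s,
      fun y _ => funext fun s => isEmptyElim s⟩
  obtain ⟨n₀, hplat⟩ := UFP_plateau (G := G) (r := r) hb hγ
  by_cases hZ : ∃ s, UFPc G r b γ n₀ s = 1
  · obtain ⟨s₀, hs₀⟩ := hZ
    exact absurd hs₀ fun h => UFP_no_plateau_state hb hγ hstop n₀ hplat s₀ h
  push_neg at hZ
  set F := UFPop G r b γ with hF
  have hlt : ∀ s, UFPc G r b γ n₀ s < 1 := fun s =>
    lt_of_le_of_ne (UFPc_le_one (G := G) (r := r) hb hγ n₀ s) (hZ s)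
  have hne : (Finset.univ : Finset S).Nonempty := Finset.univ_nonempty
  set ρ : ℝ := Finset.univ.sup' hne (UFPc G r b γ n₀) with hρ
  have hρ0 : 0 ≤ ρ :=
    le_trans (UFPc_nonneg (G := G) (r := r) (γ := γ) hb n₀ hS.some)
      (Finset.le_sup' (UFPc G r b γ n₀) (Finset.mem_univ _))
  have hρ1 : ρ < 1 := (Finset.sup'_lt_iff hne).2 fun s _ => hlt s
  have hρs : ∀ s, UFPc G r b γ n₀ s ≤ ρ := fun s =>
    Finset.le_sup' (UFPc G r b γ n₀) (Finset.mem_univ s)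
  have hlip : LipschitzWith ρ.toNNReal (F^[n₀]) := by
    refine LipschitzWith.of_dist_le_mul fun v w => ?_
    rw [Real.coe_toNNReal ρ hρ0]
    refine (dist_pi_le_iff (mul_nonneg hρ0 dist_nonneg)).2 fun s => ?_
    rw [Real.dist_eq]
    exact le_trans (UFPc_key hb n₀ v w s)
      (mul_le_mul_of_nonneg_right (hρs s) dist_nonneg)
  have hK1 : ρ.toNNReal < 1 := by
    rw [← NNReal.coe_lt_coe, Real.coe_toNNReal ρ hρ0, NNReal.coe_one]
    exact hρ1
  have hC : ContractingWith ρ.toNNReal (F^[n₀]) := ⟨hK1, hlip⟩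
  set x : S → ℝ := hC.fixedPoint (F^[n₀]) with hx
  have hfix : Function.IsFixedPt (F^[n₀]) x := hC.fixedPoint_isFixedPt
  have hFx : Function.IsFixedPt (F^[n₀]) (F x) := by
    show F^[n₀] (F x) = F x
    rw [← Function.iterate_succ_apply, Function.iterate_succ_apply']
    rw [show F^[n₀] x = x from hfix]
  refine ⟨x, ?_, ?_⟩
  · exact hC.fixedPoint_unique' hFx hfix
  · intro y hy
    have hy' : Function.IsFixedPt F y := hy
    have := hC.fixedPoint_unique (hy'.iterate n₀)
    rw [this]
end
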